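/- arXiv:0810.1774 — 9 statements merged into one kernel-verified Lean document; each statement's English description precedes it below -/
import Mathlib

section
/- Let F be an infinite field, let A be an associative unital F-algebra, and let L_1, …, L_n be Lie ideals of A. Then for every noncommutative polynomial f = f(X_1, …, X_n) in the free algebra F⟨X_1, …, X_n⟩, the F-linear span of the set of values f(L_1, …, L_n) = {f(a_1, …, a_n) : a_i ∈ L_i} is again a Lie ideal of A. -/
/-!
For `y = f(a)` with `aᵢ ∈ Lᵢ` and `b ∈ A`, put `cᵢ = [aᵢ, b] ∈ Lᵢ`. Then `P(t) = f(a + t c)` is a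
polynomial in `t` with coefficients in `A` whose values all lie in the span `W` of `f(L₁, …, Lₙ)`;
as `F` is infinite, a Vandermonde argument puts every coefficient of `P` in `W`. Since `[·, b]` is
a derivation, the coefficient of `t` is `[f(a), b]`.
-/

open Polynomial

section

variable {F : Type*} [Field F]

theorem Submodule.mem_of_forall_sum_pow_smul_mem {M : Type*} [AddCommGroup M] [Module F M]
    (W : Submodule F M) {d : ℕ} {t : Fin d → F} (ht : Function.Injective t) {v : Fin d → M}
    (h : ∀ j, ∑ k : Fin d, t j ^ (k : ℕ) • v k ∈ W) (k : Fin d) : v k ∈ W := by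
  set V := Matrix.vandermonde t
  have hinv : V⁻¹ * V = 1 :=
    Matrix.nonsing_inv_mul _ (Matrix.det_vandermonde_ne_zero_iff.mpr ht).isUnit
  have hv : v k = ∑ j, V⁻¹ k j • ∑ k' : Fin d, t j ^ (k' : ℕ) • v k' := by
    calc v k = ∑ k', (V⁻¹ * V) k k' • v k' := by simp [hinv, Matrix.one_apply]
      _ = ∑ j, V⁻¹ k j • ∑ k' : Fin d, t j ^ (k' : ℕ) • v k' := by
        simp only [Matrix.mul_apply, Finset.sum_smul, Finset.smul_sum, mul_smul]
        exact Finset.sum_comm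
  rw [hv]
  exact W.sum_smul_mem _ fun j _ => h j

variable {A : Type*} [Ring A] [Algebra F A]

theorem Polynomial.coeff_mem_of_forall_eval_algebraMap_mem [Infinite F] (W : Submodule F A)
    (p : A[X]) (h : ∀ t : F, p.eval (algebraMap F A t) ∈ W) (k : ℕ) : p.coeff k ∈ W := by
  set d := max p.natDegree k + 1
  have hsum : ∀ t : F, ∑ i : Fin d, t ^ (i : ℕ) • p.coeff i ∈ W := by
    intro t
    rw [Fin.sum_univ_eq_sum_range (fun i => t ^ i • p.coeff i)]
    convert h t using 1
    rw [eval_eq_sum_range' (Nat.lt_succ_of_le (le_max_left _ _))]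
    refine Finset.sum_congr rfl fun i _ => ?_
    rw [← map_pow, ← Algebra.commutes, Algebra.smul_def]
  have ht : Function.Injective (Infinite.natEmbedding F ∘ Fin.val (n := d)) :=
    (Infinite.natEmbedding F).injective.comp Fin.val_injective
  exact W.mem_of_forall_sum_pow_smul_mem ht (fun j => hsum _) ⟨k, by omega⟩

section Deformation

variable {ι : Type*} (a c : ι → A)

theorem eval_lift_C_add_X_mul_C (t : F) (g : FreeAlgebra F ι) :
    (FreeAlgebra.lift F (fun i => C (a i) + X * C (c i)) g).eval (algebraMap F A t) =
      FreeAlgebra.lift F (fun i => a i + t • c i) g := by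
  have hcomp : (eval₂AlgHom (AlgHom.id F A) (algebraMap F A t) fun x =>
      Algebra.commute_algebraMap_right t (AlgHom.id F A x)).comp
        (FreeAlgebra.lift F fun i => C (a i) + X * C (c i)) =
      FreeAlgebra.lift F fun i => a i + t • c i :=
    FreeAlgebra.hom_ext (funext fun i => by simp [Algebra.smul_def, Algebra.commutes])
  exact AlgHom.congr_fun hcomp g

theorem coeff_zero_lift_C_add_X_mul_C (g : FreeAlgebra F ι) :
    (FreeAlgebra.lift F (fun i => C (a i) + X * C (c i)) g).coeff 0 = FreeAlgebra.lift F a g := by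
  simpa [coeff_zero_eq_eval_zero] using eval_lift_C_add_X_mul_C a c (0 : F) g

theorem coeff_one_lift_C_add_X_mul_C (D : A →ₗ[F] A)
    (hD : ∀ x y, D (x * y) = x * D y + D x * y) (hc : ∀ i, D (a i) = c i)
    (g : FreeAlgebra F ι) :
    (FreeAlgebra.lift F (fun i => C (a i) + X * C (c i)) g).coeff 1 =
      D (FreeAlgebra.lift F a g) := by
  have hD_one : D 1 = 0 := by simpa using hD 1 1
  induction g using FreeAlgebra.induction with
  | grade0 r => simp [Algebra.algebraMap_eq_smul_one, hD_one, coeff_one]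
  | grade1 i => simp [hc]
  | mul p q hp hq =>
    simp only [map_mul, mul_coeff_one, coeff_zero_lift_C_add_X_mul_C, hp, hq, hD]
  | add p q hp hq => simp only [map_add, coeff_add, hp, hq]

end Deformation

end

/-- **Theorem 2.4.** Let `F` be an infinite field, `A` an associative unital `F`-algebra,
and `L₁, …, Lₙ` Lie ideals of `A` (i.e. `F`-subspaces closed under commutation with
arbitrary elements of `A`).  Then for every noncommutative polynomial
`f ∈ F⟨X₁,…,Xₙ⟩`, the `F`-linear span of the set of values
`f(L₁,…,Lₙ) = {f(a₁,…,aₙ) : aᵢ ∈ Lᵢ}` is again a Lie ideal of `A`. -/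
theorem stmt_0 (F : Type*) [Field F] [Infinite F]
    (A : Type*) [Ring A] [Algebra F A]
    (n : ℕ) (L : Fin n → Submodule F A)
    (hL : ∀ i, ∀ l ∈ L i, ∀ a : A, l * a - a * l ∈ L i)
    (f : FreeAlgebra F (Fin n)) :
    ∀ x ∈ Submodule.span F
        {y : A | ∃ a : Fin n → A, (∀ i, a i ∈ L i) ∧ FreeAlgebra.lift F a f = y},
      ∀ b : A, x * b - b * x ∈ Submodule.span F
        {y : A | ∃ a : Fin n → A, (∀ i, a i ∈ L i) ∧ FreeAlgebra.lift F a f = y} := by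
  set W := Submodule.span F
    {y : A | ∃ a : Fin n → A, (∀ i, a i ∈ L i) ∧ FreeAlgebra.lift F a f = y}
  intro x hx b
  set D : A →ₗ[F] A := LinearMap.mulRight F b - LinearMap.mulLeft F b
  have hD : ∀ x y, D (x * y) = x * D y + D x * y := fun x y => by
    simp only [D, LinearMap.sub_apply, LinearMap.mulRight_apply, LinearMap.mulLeft_apply]
    noncomm_ring
  suffices W ≤ W.comap D from this hx
  refine Submodule.span_le.mpr ?_
  rintro _ ⟨a, ha, rfl⟩
  set P : A[X] := FreeAlgebra.lift F (fun i => C (a i) + X * C (D (a i))) f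
  have hP_eval : ∀ t : F, P.eval (algebraMap F A t) ∈ W := fun t => by
    rw [eval_lift_C_add_X_mul_C]
    exact Submodule.subset_span
      ⟨_, fun i => (L i).add_mem (ha i) ((L i).smul_mem t (hL i _ (ha i) b)), rfl⟩
  have hP_coeff := P.coeff_mem_of_forall_eval_algebraMap_mem W hP_eval 1
  rwa [coeff_one_lift_C_add_X_mul_C a _ D hD fun _ => rfl] at hP_coeff
end

section
/- Let F be an infinite field with an involution λ ↦ λ* and char(F) ≠ 2, let A be an F-algebra with involution (a *-algebra over F, so the involution of A is additive, antimultiplicative, involutive, and (λa)* = λ* a*), and let L_1, …, L_n be Lie skew-ideals of A. Then for every *-polynomial f = f(X_1, …, X_n, X_1^*, …, X_n^*) in the free *-algebra F⟨X_1, …, X_n, X_1^*, …, X_n^*⟩, the F-linear span of the set of values {f(a_1, …, a_n, a_1^*, …, a_n^*) : a_i ∈ L_i} is again a Lie skew-ideal of A. -/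
/-!
Fix a skew element `k` and `aᵢ ∈ Lᵢ`. The perturbation `aᵢ + λ [aᵢ, k]` stays in `Lᵢ`, and when
`λ` is fixed by the involution of `F` its star is `aᵢ* + λ [aᵢ*, k]`, because `k* = -k`. So the
value of `f` at the perturbed tuple is a polynomial in `λ` with coefficients in `A`, whose linear
coefficient is `[f(a, a*), k]` and whose values at the infinitely many fixed `λ` lie in the span
of values. Testing against linear functionals that vanish on the span turns this into scalar
polynomials with infinitely many roots, so every coefficient lies in the span.
-/

open Polynomial

theorem RingHom.infinite_setOf_apply_eq_self {F : Type*} [Field F] [Infinite F] (τ : F →+* F)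
    (hτ : ∀ c, τ (τ c) = c) : {c | τ c = c}.Infinite := by
  set K := {c | τ c = c}
  intro hK
  -- `z` is a root of `X² - (z + τ z) X + z τ z`, whose coefficients lie in `K`
  let g : F → F × F := fun z => (z + τ z, z * τ z)
  have hg : Set.univ ⊆ g ⁻¹' K ×ˢ K := fun z _ =>
    ⟨by simp [K, g, hτ, add_comm], by simp [K, g, hτ, mul_comm]⟩
  refine Set.infinite_univ (((hK.prod hK).preimage' fun sp _ => ?_).subset hg)
  have hq : X ^ 2 - C sp.1 * X + C sp.2 ≠ 0 := Monic.ne_zero (by monicity!)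
  refine (finite_setOfPred_isRoot hq).subset fun z hz => ?_
  simp only [Set.mem_preimage, Set.mem_singleton_iff, g] at hz
  simp [← hz]
  ring

theorem Polynomial.coeff_mem_of_forall_eval_algebraMap_mem_s1 {F A : Type*} [Field F] [Ring A]
    [Algebra F A] {S : Submodule F A} {s : Set F} (hs : s.Infinite) {P : A[X]}
    (hP : ∀ l ∈ s, P.eval (algebraMap F A l) ∈ S) (j : ℕ) : P.coeff j ∈ S := by
  by_contra hj
  obtain ⟨φ, hφj, hφS⟩ := S.exists_dual_map_eq_bot_of_notMem hj inferInstance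
  let p : F[X] := ∑ i ∈ P.support, monomial i (φ (P.coeff i))
  have hp_coeff : p.coeff j = φ (P.coeff j) := by
    simp +contextual [p, finsetSum_coeff, coeff_monomial]
  have hp_eval : ∀ l, p.eval l = φ (P.eval (algebraMap F A l)) := fun l => by
    simp only [p, eval_finsetSum, eval_monomial]
    rw [eval_eq_sum, Polynomial.sum, map_sum]
    refine Finset.sum_congr rfl fun i _ => ?_
    rw [← map_pow, ← Algebra.commutes, ← Algebra.smul_def, map_smul, smul_eq_mul, mul_comm]
  refine hφj (hp_coeff ▸ ?_)
  rw [eq_zero_of_infinite_isRoot p (hs.mono fun l hl => ?_), coeff_zero]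
  rw [Set.mem_ofPred_eq, IsRoot.def, hp_eval]
  exact LinearMap.le_ker_iff_map.mpr hφS (hP l hl)

section FirstOrder

variable {R A ι : Type*} [CommRing R] [Ring A] [Algebra R A]

theorem FreeAlgebra.coeff_lift_C_add_C_commutator_mul_X (k : A) (w : ι → A)
    (g : FreeAlgebra R ι) :
    (lift R (fun j => C (w j) + C (w j * k - k * w j) * X) g).coeff 0 = lift R w g ∧
      (lift R (fun j => C (w j) + C (w j * k - k * w j) * X) g).coeff 1 =
        lift R w g * k - k * lift R w g := by
  induction g using FreeAlgebra.induction with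
  | grade0 r => simp [Polynomial.algebraMap_apply, Algebra.commutes r k]
  | grade1 j => simp
  | mul p q hp hq =>
    refine ⟨by rw [map_mul, mul_coeff_zero, hp.1, hq.1, map_mul], ?_⟩
    simp only [map_mul, coeff_mul, Finset.Nat.sum_antidiagonal_eq_sum_range_succ_mk,
      Finset.sum_range_succ, Finset.sum_range_zero, hp.1, hp.2, hq.1, hq.2]
    noncomm_ring
  | add p q hp hq =>
    refine ⟨by rw [map_add, coeff_add, hp.1, hq.1, map_add], ?_⟩
    rw [map_add, coeff_add, hp.2, hq.2, map_add]
    noncomm_ring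

theorem FreeAlgebra.eval_algebraMap_lift (v : ι → A[X]) (l : R) (g : FreeAlgebra R ι) :
    (lift R v g).eval (algebraMap R A l) = lift R (fun j => (v j).eval (algebraMap R A l)) g := by
  let E : A[X] →ₐ[R] A :=
    eval₂AlgHom (AlgHom.id R A) (algebraMap R A l) fun a => (Algebra.commutes l a).symm
  change E.comp (lift R v) g = _
  rw [← lift_comp_ι (E.comp (lift R v))]
  congr 2
  ext j
  simp only [Function.comp_apply, AlgHom.comp_apply, lift_ι_apply]
  rfl

end FirstOrder

theorem stmt_1_general (F : Type*) [Field F] [Infinite F]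
    (τ : F →+* F) (hτ : ∀ c, τ (τ c) = c)
    (A : Type*) [Ring A] [Algebra F A]
    (st : A → A)
    (hadd : ∀ x y, st (x + y) = st x + st y)
    (hmul : ∀ x y, st (x * y) = st y * st x)
    (hsmul : ∀ (c : F) (x : A), st (c • x) = τ c • st x)
    (n : ℕ) (L : Fin n → Submodule F A)
    (hL : ∀ i, ∀ l ∈ L i, ∀ k : A, st k = -k → l * k - k * l ∈ L i)
    (f : FreeAlgebra F (Fin n ⊕ Fin n)) :
    ∀ x ∈ Submodule.span F
        {y : A | ∃ a : Fin n → A, (∀ i, a i ∈ L i) ∧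
          FreeAlgebra.lift F (Sum.elim a fun i => st (a i)) f = y},
      ∀ k : A, st k = -k → x * k - k * x ∈ Submodule.span F
        {y : A | ∃ a : Fin n → A, (∀ i, a i ∈ L i) ∧
          FreeAlgebra.lift F (Sum.elim a fun i => st (a i)) f = y} := by
  intro x hx k hk
  set S := Submodule.span F {y : A | ∃ a : Fin n → A, (∀ i, a i ∈ L i) ∧
    FreeAlgebra.lift F (Sum.elim a fun i => st (a i)) f = y}
  suffices S ≤ S.comap (LinearMap.mulRight F k - LinearMap.mulLeft F k) from this hx
  refine Submodule.span_le.mpr ?_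
  rintro _ ⟨a, ha, rfl⟩
  let w : Fin n ⊕ Fin n → A := Sum.elim a fun i => st (a i)
  have hst : ∀ x, st (x * k - k * x) = st x * k - k * st x := fun x => by
    rw [← AddMonoidHom.mk'_apply st hadd, map_sub]
    simp only [AddMonoidHom.mk'_apply, hmul, hk]
    noncomm_ring
  show FreeAlgebra.lift F w f * k - k * FreeAlgebra.lift F w f ∈ S
  rw [← (FreeAlgebra.coeff_lift_C_add_C_commutator_mul_X k w f).2]
  refine coeff_mem_of_forall_eval_algebraMap_mem_s1 (τ.infinite_setOf_apply_eq_self hτ)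
    (fun l hl => ?_) 1
  rw [FreeAlgebra.eval_algebraMap_lift]
  refine Submodule.subset_span ⟨fun i => a i + l • (a i * k - k * a i),
    fun i => add_mem (ha i) ((L i).smul_mem l (hL i _ (ha i) k hk)), ?_⟩
  congr 1
  ext (i | i) <;> simp [w, ← Algebra.commutes, ← Algebra.smul_def, hadd, hsmul, hst, hl.out]

/-- **Theorem 2.7.** Let `F` be an infinite field with an involution `τ` and `char F ≠ 2`,
let `A` be an `F`-algebra with involution `st` (additive, antimultiplicative, involutive,
`(λ•a)* = τ(λ)•a*`), and let `L₁, …, Lₙ` be Lie skew-ideals of `A`.  Then for every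
`*`-polynomial `f ∈ F⟨X₁,…,Xₙ,X₁*,…,Xₙ*⟩` (the free algebra on `Fin n ⊕ Fin n`, where
`inl i` plays the role of `Xᵢ` and `inr i` of `Xᵢ*`), the `F`-linear span of the set of
values `{f(a₁,…,aₙ,a₁*,…,aₙ*) : aᵢ ∈ Lᵢ}` is again a Lie skew-ideal of `A`. -/
theorem stmt_1 (F : Type*) [Field F] [Infinite F]
    (τ : F →+* F) (hτ : ∀ c, τ (τ c) = c) (hchar : ringChar F ≠ 2)
    (A : Type*) [Ring A] [Algebra F A]
    (st : A → A)
    (hadd : ∀ x y, st (x + y) = st x + st y)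
    (hmul : ∀ x y, st (x * y) = st y * st x)
    (hinv : ∀ x, st (st x) = x)
    (hsmul : ∀ (c : F) (x : A), st (c • x) = τ c • st x)
    (n : ℕ) (L : Fin n → Submodule F A)
    (hL : ∀ i, ∀ l ∈ L i, ∀ k : A, st k = -k → l * k - k * l ∈ L i)
    (f : FreeAlgebra F (Fin n ⊕ Fin n)) :
    ∀ x ∈ Submodule.span F
        {y : A | ∃ a : Fin n → A, (∀ i, a i ∈ L i) ∧
          FreeAlgebra.lift F (Sum.elim a fun i => st (a i)) f = y},
      ∀ k : A, st k = -k → x * k - k * x ∈ Submodule.span F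
        {y : A | ∃ a : Fin n → A, (∀ i, a i ∈ L i) ∧
          FreeAlgebra.lift F (Sum.elim a fun i => st (a i)) f = y} :=
  stmt_1_general F τ hτ A st hadd hmul hsmul n L hL f
end

section
/- Let F be a field and A = M_d(F) with d ≥ 2, and suppose that d ≠ 2 or char(F) ≠ 2. Then A has exactly four Lie ideals: 0, the scalar matrices F·I, the set [A,A] of all matrices with trace zero, and A itself. -/
/-!
Write `E i j = single i j 1`. A Lie ideal `L` inside the scalars is `0` or `F ∙ 1`. Otherwise it
contains a non-scalar `x`, and either `x` or `⁅x, E i j⁆` (whose `(i, j)` entry is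
`x i i - x j j`) has a nonzero off-diagonal entry `y i j`. Double commutators with matrix units
isolate that entry: `⁅E j i, ⁅y, E j i⁆⁆ = 2 y i j • E j i`, and, with a third index `k`,
`⁅⁅E j i, ⁅y, E j k⁆⁆, E k i⁆ = y i j • E j i`; this is where `2 ≠ 0` or `d ≥ 3` enters.
Commutators of matrix units carry `E j i` to every off-diagonal position and produce every
`E i i - E j j`, so `L` contains the trace-zero matrices, a hyperplane, and is one of the two
submodules above it.
-/

open Matrix

attribute [local instance] LieRing.ofAssociativeRing

def IsLieIdeal {R A : Type*} [CommRing R] [Ring A] [Module R A] (L : Submodule R A) : Prop :=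
  ∀ l ∈ L, ∀ a : A, ⁅l, a⁆ ∈ L

section Ring

variable {R A : Type*} [CommRing R] [Ring A]

lemma IsLieIdeal.lie_mem_right [Module R A] {L : Submodule R A} (hL : IsLieIdeal L) {l : A}
    (hl : l ∈ L) (a : A) : ⁅a, l⁆ ∈ L := by
  rw [← lie_skew]
  exact L.neg_mem (hL l hl a)

lemma isLieIdeal_bot [Module R A] : IsLieIdeal (⊥ : Submodule R A) := by
  rintro l hl a
  simp [(Submodule.mem_bot R).1 hl]

lemma isLieIdeal_top [Module R A] : IsLieIdeal (⊤ : Submodule R A) :=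
  fun _ _ _ ↦ Submodule.mem_top

lemma isLieIdeal_span_one [Algebra R A] : IsLieIdeal (Submodule.span R {(1 : A)}) := by
  rintro l hl a
  obtain ⟨c, rfl⟩ := Submodule.mem_span_singleton.1 hl
  simp [Ring.lie_def, Algebra.smul_def, Algebra.commutes c a]

lemma lie_lie_of_mul_eq_zero {e f : A} (hef : e * f = 0) (hfe : f * e = 0) (x : A) :
    ⁅e, ⁅x, f⁆⁆ = e * x * f + f * x * e := by
  have : ⁅e, ⁅x, f⁆⁆ = e * x * f + f * x * e - e * f * x - x * (f * e) := by
    simp only [Ring.lie_def]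
    noncomm_ring
  simp [this, hef, hfe]

end Ring

namespace Matrix

variable {n R : Type*} [Fintype n] [DecidableEq n]

section CommRing

variable [CommRing R]

lemma lie_single_single_of_ne {i j k : n} (hki : k ≠ i) (a b : R) :
    ⁅single i j a, single j k b⁆ = single i k (a * b) := by
  simp [Ring.lie_def, single_mul_single_of_ne _ _ _ _ hki]

lemma lie_single_single_swap (i j : n) (a b : R) :
    ⁅single i j a, single j i b⁆ = single i i (a * b) - single j j (b * a) := by
  simp [Ring.lie_def]

lemma lie_single_apply_self (x : Matrix n n R) (i j : n) :
    ⁅x, single i j 1⁆ i j = x i i - x j j := by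
  simp [Ring.lie_def]

lemma isLieIdeal_ker_traceLinearMap : IsLieIdeal (LinearMap.ker (traceLinearMap n R R)) := by
  intro l _ a
  simp [Ring.lie_def, trace_mul_comm l a]

lemma ker_traceLinearMap_le_of_single_mem {L : Submodule R (Matrix n n R)}
    (hoff : ∀ i j, i ≠ j → single i j 1 ∈ L) (hdiag : ∀ i j, single i i 1 - single j j 1 ∈ L) :
    LinearMap.ker (traceLinearMap n R R) ≤ L := by
  intro x hx
  cases isEmpty_or_nonempty n
  · simp [Subsingleton.elim x 0]
  obtain ⟨i₀⟩ := ‹Nonempty n›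
  have hsum : x = ∑ i, ∑ j, x i j • (single i j 1 - if i = j then single i₀ i₀ 1 else 0) := by
    have htr : ∑ i, x i i = 0 := hx
    simp only [smul_sub, Finset.sum_sub_distrib, smul_ite, smul_zero, Finset.sum_ite_eq,
      Finset.mem_univ, if_true]
    rw [← Finset.sum_smul, htr, zero_smul, sub_zero]
    simp only [smul_single, smul_eq_mul, mul_one]
    exact matrix_eq_sum_single x
  rw [hsum]
  refine Submodule.sum_mem _ fun i _ ↦ Submodule.sum_mem _ fun j _ ↦ L.smul_mem _ ?_
  split_ifs with hij
  · exact hij ▸ hdiag i i₀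
  · simpa using hoff i j hij

variable {L : Submodule R (Matrix n n R)}

lemma IsLieIdeal.single_mem_of_single_mem (hL : IsLieIdeal L) {i j k l : n}
    (h : single i j (1 : R) ∈ L) (hkj : k ≠ j) (hlk : l ≠ k) : single k l (1 : R) ∈ L := by
  have hkj' : single k j (1 : R) ∈ L := by
    simpa [lie_single_single_of_ne hkj.symm] using hL.lie_mem_right h (single k i 1)
  simpa [lie_single_single_of_ne hlk] using hL _ hkj' (single j l 1)

lemma IsLieIdeal.exists_apply_ne_zero_of_notMem_span_one [Nonempty n] (hL : IsLieIdeal L)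
    {x : Matrix n n R} (hx : x ∈ L) (hx1 : x ∉ Submodule.span R {1}) :
    ∃ y ∈ L, ∃ i j, i ≠ j ∧ y i j ≠ 0 := by
  by_contra! h
  have hdiag : ∀ i j, x i i = x j j := fun i j ↦ by
    rcases eq_or_ne i j with rfl | hij
    · rfl
    · simpa [lie_single_apply_self, sub_eq_zero] using h _ (hL x hx (single i j 1)) i j hij
  obtain ⟨i₀⟩ := ‹Nonempty n›
  refine hx1 (Submodule.mem_span_singleton.2 ⟨x i₀ i₀, ?_⟩)
  ext i j
  rcases eq_or_ne i j with rfl | hij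
  · simp [hdiag i i₀]
  · simp [one_apply_ne hij, h x hx i j hij]

end CommRing

variable {F : Type*} [Field F] {L : Submodule F (Matrix n n F)}

omit [Fintype n] in
lemma single_one_mem_of_single_mem {i j : n} {c : F} (h : single i j c ∈ L) (hc : c ≠ 0) :
    single i j 1 ∈ L := by
  simpa [smul_single, hc] using L.smul_mem c⁻¹ h

lemma IsLieIdeal.single_mem_of_two_ne_zero (hL : IsLieIdeal L) (h2 : (2 : F) ≠ 0)
    {x : Matrix n n F} (hx : x ∈ L) {i j : n} (hij : i ≠ j) (hxij : x i j ≠ 0) :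
    single j i 1 ∈ L := by
  have hee : single j i (1 : F) * single j i 1 = 0 := single_mul_single_of_ne _ _ _ _ hij _
  have key : ⁅single j i (1 : F), ⁅x, single j i (1 : F)⁆⁆ = single j i (2 * x i j) := by
    simp [lie_lie_of_mul_eq_zero hee hee, ← single_add, two_mul]
  refine single_one_mem_of_single_mem ?_ (mul_ne_zero h2 hxij)
  rw [← key]
  exact hL.lie_mem_right (hL x hx _) _

lemma IsLieIdeal.single_mem_of_ne_of_ne (hL : IsLieIdeal L) {x : Matrix n n F} (hx : x ∈ L)
    {i j k : n} (hij : i ≠ j) (hki : k ≠ i) (hkj : k ≠ j) (hxij : x i j ≠ 0) :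
    single j i 1 ∈ L := by
  have h₁ : ⁅single j i (1 : F), ⁅x, single j k (1 : F)⁆⁆ =
      single j k (x i j) + single j i (x k j) := by
    have hef : single j i (1 : F) * single j k 1 = 0 := single_mul_single_of_ne _ _ _ _ hij _
    have hfe : single j k (1 : F) * single j i 1 = 0 := single_mul_single_of_ne _ _ _ _ hkj _
    simp [lie_lie_of_mul_eq_zero hef hfe]
  have h₂ : ⁅single j k (x i j) + single j i (x k j), single k i (1 : F)⁆ =
      single j i (x i j) := by
    simp [Ring.lie_def, add_mul, mul_add, single_mul_single_of_ne _ _ _ _ hki.symm,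
      single_mul_single_of_ne _ _ _ _ hij]
  refine single_one_mem_of_single_mem ?_ hxij
  rw [← h₂, ← h₁]
  exact hL _ (hL.lie_mem_right (hL x hx _) _) _

lemma IsLieIdeal.single_mem_of_apply_ne_zero (hL : IsLieIdeal L)
    (hdeg : 3 ≤ Fintype.card n ∨ (2 : F) ≠ 0) {x : Matrix n n F} (hx : x ∈ L) {i j : n}
    (hij : i ≠ j) (hxij : x i j ≠ 0) : single j i 1 ∈ L := by
  rcases hdeg with hcard | h2
  · obtain ⟨k, hki, hkj⟩ := ENat.exists_ne_ne_of_three_le (by simpa using hcard) i j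
    exact hL.single_mem_of_ne_of_ne hx hij hki hkj hxij
  · exact hL.single_mem_of_two_ne_zero h2 hx hij hxij

lemma IsLieIdeal.ker_traceLinearMap_le [Nonempty n] (hL : IsLieIdeal L)
    (hdeg : 3 ≤ Fintype.card n ∨ (2 : F) ≠ 0) {x : Matrix n n F} (hx : x ∈ L)
    (hx1 : x ∉ Submodule.span F {1}) : LinearMap.ker (traceLinearMap n F F) ≤ L := by
  obtain ⟨y, hy, i, j, hij, hyij⟩ := hL.exists_apply_ne_zero_of_notMem_span_one hx hx1
  have hEji : single j i 1 ∈ L := hL.single_mem_of_apply_ne_zero hdeg hy hij hyij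
  have hEij : single i j 1 ∈ L := hL.single_mem_of_apply_ne_zero hdeg hEji hij.symm (by simp)
  have hoff : ∀ k l, k ≠ l → single k l 1 ∈ L := fun k l hkl ↦ by
    rcases eq_or_ne k j with rfl | hkj
    · exact hL.single_mem_of_single_mem hEji hij.symm hkl.symm
    · exact hL.single_mem_of_single_mem hEij hkj hkl.symm
  refine ker_traceLinearMap_le_of_single_mem hoff fun k l ↦ ?_
  rcases eq_or_ne k l with rfl | hkl
  · simp
  · simpa [lie_single_single_swap] using hL _ (hoff k l hkl) (single l k 1)

theorem IsLieIdeal.eq_bot_or_eq_span_one_or_eq_ker_trace_or_eq_top [Nonempty n]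
    (hL : IsLieIdeal L) (hdeg : 3 ≤ Fintype.card n ∨ (2 : F) ≠ 0) :
    L = ⊥ ∨ L = Submodule.span F {1} ∨ L = LinearMap.ker (traceLinearMap n F F) ∨ L = ⊤ := by
  by_cases hL1 : L ≤ Submodule.span F {1}
  · exact ((nonzero_span_atom _ one_ne_zero).le_iff.1 hL1).imp_right Or.inl
  · obtain ⟨x, hx, hx1⟩ := SetLike.not_le_iff_exists.1 hL1
    have hcoatom :=
      LinearMap.isCoatom_ker_of_surjective (f := traceLinearMap n F F) trace_surjective
    rcases hcoatom.le_iff.1 (hL.ker_traceLinearMap_le hdeg hx hx1) with h | h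
    · exact Or.inr (Or.inr (Or.inr h))
    · exact Or.inr (Or.inr (Or.inl h))

end Matrix

/-- **Lemma 3.1 (folklore).** Let `F` be a field and `A = M_d(F)` with `d ≥ 2`, and suppose
`d ≠ 2` or `char F ≠ 2`.  Then `A` has exactly four Lie ideals: `0`, the scalar matrices
`F·I`, the set of trace-zero matrices (which equals `[A,A]`), and `A` itself.
Formalized: an `F`-subspace `L` of `M_d(F)` is a Lie ideal iff it is one of the four. -/
theorem stmt_2 (F : Type*) [Field F] (d : ℕ) (hd : 2 ≤ d)
    (h : d ≠ 2 ∨ ringChar F ≠ 2)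
    (L : Submodule F (Matrix (Fin d) (Fin d) F)) :
    (∀ l ∈ L, ∀ a : Matrix (Fin d) (Fin d) F, l * a - a * l ∈ L) ↔
      (L = ⊥ ∨
       L = Submodule.span F {(1 : Matrix (Fin d) (Fin d) F)} ∨
       (L : Set (Matrix (Fin d) (Fin d) F)) = {x | Matrix.trace x = 0} ∨
       L = ⊤) := by
  have : Nonempty (Fin d) := ⟨⟨0, by omega⟩⟩
  have hdeg : 3 ≤ Fintype.card (Fin d) ∨ (2 : F) ≠ 0 :=
    h.imp (fun h ↦ by rw [Fintype.card_fin]; omega) Ring.two_ne_zero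
  have hker : (L : Set (Matrix (Fin d) (Fin d) F)) = {x | trace x = 0} ↔
      L = LinearMap.ker (traceLinearMap (Fin d) F F) :=
    (SetLike.ext'_iff (q := LinearMap.ker (traceLinearMap (Fin d) F F))).symm
  rw [hker]
  refine ⟨fun hL ↦ IsLieIdeal.eq_bot_or_eq_span_one_or_eq_ker_trace_or_eq_top hL hdeg, ?_⟩
  rintro (rfl | rfl | rfl | rfl)
  exacts [isLieIdeal_bot, isLieIdeal_span_one, isLieIdeal_ker_traceLinearMap, isLieIdeal_top]
end

section
/- Let A be a real or complex unital Banach algebra equipped with a continuous ℝ-linear involution * (an additive, antimultiplicative, involutive map). If a closed linear subspace L of A is closed under conjugation with unitaries (that is, u x u* ∈ L for every x ∈ L and every u ∈ A with u* = u^{-1}), then L is a Lie skew-ideal of A: [k, x] ∈ L for every x ∈ L and every k ∈ A with k* = −k. -/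
/-! For skew-symmetric `k`, the curve `t ↦ e^{tk} x e^{-tk}` consists of unitary conjugates of
`x`, so it stays in `L`; as `L` is a closed subspace, it also contains the derivative of the curve
at `0`, which is `k x - x k`. -/

open NormedSpace

theorem HasDerivAt.mem_of_forall_mem {𝕜 F : Type*} [NontriviallyNormedField 𝕜]
    [NormedAddCommGroup F] [NormedSpace 𝕜 F] {L : Submodule 𝕜 F} (hL : IsClosed (L : Set F))
    {f : 𝕜 → F} {f' : F} {x : 𝕜} (hf : HasDerivAt f f' x) (hfL : ∀ t, f t ∈ L) : f' ∈ L := by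
  rw [← hf.deriv]
  refine closure_minimal ?_ hL (range_deriv_subset_closure_span_image f dense_univ ⟨x, rfl⟩)
  rw [Set.image_univ, SetLike.coe_subset_coe, Submodule.span_le]
  exact Set.range_subset_iff.mpr hfL

section StarAlgebra

variable {A : Type*} [NormedRing A] [NormedAlgebra ℝ A] [StarRing A] [ContinuousStar A]
  [StarModule ℝ A]

theorem HasDerivAt.mul_mul_star {u : ℝ → A} {u' : A} {t : ℝ} (hu : HasDerivAt u u' t) (x : A) :
    HasDerivAt (fun s => u s * x * star (u s)) (u' * x * star (u t) + u t * x * star u') t :=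
  (hu.mul_const x).mul hu.star

variable [CompleteSpace A]

theorem exp_smul_mem_unitary_of_mem_skewAdjoint {k : A} (hk : k ∈ skewAdjoint A) (t : ℝ) :
    exp (t • k) ∈ unitary A :=
  letI : NormedAlgebra ℚ A := NormedAlgebra.restrictScalars ℚ ℝ A
  exp_mem_unitary_of_mem_skewAdjoint (skewAdjoint.smul_mem t hk)

theorem Submodule.lie_mem_of_unitary_conj_mem (L : Submodule ℝ A) (hL : IsClosed (L : Set A))
    (hconj : ∀ u ∈ unitary A, ∀ x ∈ L, u * x * star u ∈ L) {k : A} (hk : k ∈ skewAdjoint A)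
    {x : A} (hx : x ∈ L) : k * x - x * k ∈ L := by
  have hexp : HasDerivAt (fun t : ℝ => exp (t • k)) k 0 := by
    simpa using hasDerivAt_exp_smul_const' (𝕂 := ℝ) k 0
  have hderiv := hexp.mul_mul_star x
  simp only [zero_smul, exp_zero, star_one, mul_one, one_mul, skewAdjoint.mem_iff.mp hk,
    mul_neg, ← sub_eq_add_neg] at hderiv
  exact hderiv.mem_of_forall_mem hL fun t =>
    hconj _ (exp_smul_mem_unitary_of_mem_skewAdjoint hk t) x hx

end StarAlgebra

/-- **Proposition 3.5.** Let `A` be a real (or complex, viewed as real) unital Banach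
algebra with a continuous `ℝ`-linear involution `st` (additive, antimultiplicative,
involutive).  If a closed linear subspace `L` of `A` is closed under conjugation with
unitaries (`u x u* ∈ L` for all `x ∈ L` and all `u` with `u* = u⁻¹`, i.e.
`u * u* = 1 = u* * u`), then `L` is a Lie skew-ideal of `A`: `[k,x] ∈ L` for every
`x ∈ L` and every skew-symmetric `k`. -/
theorem stmt_4 (A : Type*) [NormedRing A] [NormedAlgebra ℝ A] [CompleteSpace A]
    (st : A → A) (hcont : Continuous st)
    (hadd : ∀ x y, st (x + y) = st x + st y)
    (hmul : ∀ x y, st (x * y) = st y * st x)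
    (hinv : ∀ x, st (st x) = x)
    (hlin : ∀ (r : ℝ) (x : A), st (r • x) = r • st x)
    (L : Submodule ℝ A) (hclosed : IsClosed (L : Set A))
    (hconj : ∀ x ∈ L, ∀ u : A, u * st u = 1 → st u * u = 1 → u * x * st u ∈ L) :
    ∀ x ∈ L, ∀ k : A, st k = -k → k * x - x * k ∈ L := by
  intro x hx k hk
  let _ : StarRing A :=
    { star := st, star_involutive := hinv, star_mul := hmul, star_add := hadd }
  have : ContinuousStar A := ⟨hcont⟩
  have : StarModule ℝ A := ⟨hlin⟩
  refine L.lie_mem_of_unitary_conj_mem hclosed (fun u hu y hy => ?_) hk hx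
  exact hconj y hy u (Unitary.mem_iff.mp hu).2 (Unitary.mem_iff.mp hu).1
end

section
/- Let F be a field with char(F) ≠ 2, 3, let d be a positive integer with d ≠ 2 and d ≠ 4, and let A = M_d(F) be endowed with the transpose involution A ↦ Aᵗ. Then A has exactly eight Lie skew-ideals: 0, the scalar matrices Z = F·I, the skew-symmetric matrices K, the F-linear span [S,K] of all commutators [s,k] with s symmetric and k skew-symmetric (equal to the symmetric matrices of trace zero), the symmetric matrices S, Z + K, the F-linear span [A,A] of all commutators (equal to the trace-zero matrices), and A itself. -/
/-!
Let `k_pq = E_pq - E_qp`. These span `K`, so `L` is a Lie skew-ideal iff `ad k_pq` maps `L` into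
itself for all `p, q`.

Summing `ad(k_pq)²` over all `p, q` gives `l ↦ (4 - 4d) l - 4 lᵀ + 4 tr(l) 1`, so `lᵀ - tr(l) 1 ∈ L`
for `l ∈ L`, and a non-symmetric `l ∈ L` yields `w + c 1 ∈ L` with `w` skew and `w_pq ≠ 0`. On skew
matrices `-ad(k_pq)²` keeps the entries `(a, b)` with exactly one of `a, b` in `{p, q}` and kills
the others; composing such operators isolates `w_pq k_pq` up to a scalar matrix, in one step for
`d = 3` and in four for `d ≥ 5` (for `d = 4`, `so(4) ≅ so(3) × so(3)` is not simple). Likewise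
`ad(k_pq)²(ad(k_pq)² + 1)` extracts some `E_ab + E_ba` from a non-scalar symmetric element of `L`,
as the eigenvalues `-1` and `-4` of `ad(k_pq)²` differ. Brackets with the `k_xy` carry one such
generator to all of them. Hence `L ⊄ S` forces `K ⊆ L`, and a non-scalar symmetric element of `L`
forces `S₀ ⊆ L`, where `S₀ = [S, K]` is the trace-zero part of `S`. So `L` lies between the ends of
one of the codimension-one pairs `0 ⊂ F 1`, `K ⊂ F 1 + K`, `S₀ ⊂ S`, `[A, A] ⊂ A`, and is one of
them.
-/

open Matrix

theorem Submodule.eq_or_eq_of_le_sup_span_singleton {K V : Type*} [Field K] [AddCommGroup V]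
    [Module K V] {M L N : Submodule K V} {v : V} (hN : N ≤ M ⊔ span K {v}) (hML : M ≤ L)
    (hLN : L ≤ N) : L = M ∨ L = N := by
  by_cases hLM : L ≤ M
  · exact .inl (le_antisymm hLM hML)
  refine .inr (le_antisymm hLN (hN.trans (sup_le hML ?_)))
  obtain ⟨l, hlL, hlM⟩ := SetLike.not_le_iff_exists.mp hLM
  obtain ⟨m, hm, w, hw, rfl⟩ := mem_sup.mp (hN (hLN hlL))
  obtain ⟨c, rfl⟩ := mem_span_singleton.mp hw
  have hc : c ≠ 0 := by
    rintro rfl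
    exact hlM (by simpa using hm)
  have hcv : c • v ∈ L := by simpa using L.sub_mem hlL (hML hm)
  rw [span_singleton_le_iff_mem]
  simpa [hc] using L.smul_mem c⁻¹ hcv

theorem forall_ne_of_symm_of_step {α : Type*} {P : α → α → Prop} (hsymm : ∀ x y, P x y → P y x)
    (hstep : ∀ x y z, x ≠ y → x ≠ z → y ≠ z → P y z → P x z) {a b : α} (hab : a ≠ b)
    (h : P a b) : ∀ x y, x ≠ y → P x y := by
  have toB : ∀ z, z ≠ b → P z b := fun z hz => by
    by_cases hza : z = a
    · exact hza ▸ h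
    · exact hstep z a b hza hz hab h
  intro x y hxy
  by_cases hy : y = b
  · exact hy ▸ toB x (hy ▸ hxy)
  by_cases hx : x = b
  · exact hx ▸ hsymm _ _ (toB y hy)
  exact hstep x b y hx hxy (Ne.symm hy) (hsymm _ _ (toB y hy))

theorem Ring.natCast_ne_zero_of_ringChar_ne {R : Type*} [NonAssocSemiring R] [Nontrivial R]
    {p : ℕ} (hp : p.Prime) (hR : ringChar R ≠ p) : (p : R) ≠ 0 := by
  rw [Ne, ringChar.spec, Nat.dvd_prime hp]
  exact mt (or_iff_left hR).mp CharP.ringChar_ne_one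

theorem Fintype.exists_ne_ne_of_card_ne_two {n : Type*} [Fintype n] [DecidableEq n]
    (hn : Fintype.card n ≠ 2) {p q : n} (hpq : p ≠ q) : ∃ r, r ≠ p ∧ r ≠ q := by
  by_contra! h
  have huniv : (Finset.univ : Finset n) = {p, q} := by
    ext r
    simp only [Finset.mem_univ, Finset.mem_insert, Finset.mem_singleton, true_iff]
    by_cases hr : r = p
    exacts [.inl hr, .inr (h r hr)]
  exact hn (by rw [← Finset.card_univ, huniv, Finset.card_pair hpq])

namespace TransposeInvolution

variable {n : Type*}

section ElementaryMatrices

variable [DecidableEq n] (R : Type*) [CommRing R]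

def skewSingle (i j : n) : Matrix n n R := single i j 1 - single j i 1

def symmSingle (i j : n) : Matrix n n R := single i j 1 + single j i 1

def diagDiff (i j : n) : Matrix n n R := single i i 1 - single j j 1

variable {R}

theorem skewSingle_transpose (i j : n) : (skewSingle R i j)ᵀ = -skewSingle R i j := by
  simp [skewSingle]

theorem skewSingle_swap (i j : n) : skewSingle R j i = -skewSingle R i j := by
  simp [skewSingle]

theorem symmSingle_swap (i j : n) : symmSingle R j i = symmSingle R i j := by
  simp [symmSingle, add_comm]

theorem symmSingle_transpose (i j : n) : (symmSingle R i j)ᵀ = symmSingle R i j := by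
  simp [symmSingle, add_comm]

theorem diagDiff_swap (i j : n) : diagDiff R j i = -diagDiff R i j := by
  simp [diagDiff]

theorem skewSingle_apply (i j a b : n) : skewSingle R i j a b =
    (if a = i ∧ b = j then 1 else 0) - (if a = j ∧ b = i then 1 else 0) := by
  simp [skewSingle, single_apply, eq_comm]

theorem symmSingle_apply (i j a b : n) : symmSingle R i j a b =
    (if a = i ∧ b = j then 1 else 0) + (if a = j ∧ b = i then 1 else 0) := by
  simp [symmSingle, single_apply, eq_comm]

theorem diagDiff_apply (i j a b : n) : diagDiff R i j a b =
    (if a = i ∧ b = i then 1 else 0) - (if a = j ∧ b = j then 1 else 0) := by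
  simp [diagDiff, single_apply, eq_comm]

variable [Fintype n]

theorem lie_skewSingle_apply (p q : n) (x : Matrix n n R) (a b : n) :
    ⁅skewSingle R p q, x⁆ a b = (if a = p then x q b else 0) - (if a = q then x p b else 0)
      - (if b = q then x a p else 0) + (if b = p then x a q else 0) := by
  simp only [Ring.lie_def, skewSingle, sub_mul, mul_sub, Matrix.sub_apply, mul_apply, single_apply,
    ite_and, ite_mul, one_mul, zero_mul, mul_ite, mul_one, mul_zero, Finset.sum_ite_irrel,
    Finset.sum_const_zero, Finset.sum_ite_eq, Finset.mem_univ, if_true]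
  simp only [eq_comm (a := p), eq_comm (a := q)]
  abel

theorem lie_add_smul_one (x y : Matrix n n R) (c : R) : ⁅x, y + c • 1⁆ = ⁅x, y⁆ := by
  simp [Ring.lie_def, mul_add, add_mul]

theorem lie_add_right (x y z : Matrix n n R) : ⁅x, y + z⁆ = ⁅x, y⁆ + ⁅x, z⁆ := by
  simp only [Ring.lie_def, mul_add, add_mul]
  abel

theorem lie_smul_right (x y : Matrix n n R) (c : R) : ⁅x, c • y⁆ = c • ⁅x, y⁆ := by
  simp only [Ring.lie_def, mul_smul_comm, smul_mul_assoc, smul_sub]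

variable {x y z : n}

theorem lie_skewSingle_skewSingle (hxy : x ≠ y) (hyz : y ≠ z) (hxz : x ≠ z) :
    ⁅skewSingle R x y, skewSingle R y z⁆ = skewSingle R x z := by
  simp [Ring.lie_def, skewSingle, sub_mul, mul_sub, hxy, hyz, hxz, hxy.symm, hyz.symm, hxz.symm]

theorem lie_skewSingle_symmSingle (hxy : x ≠ y) (hyz : y ≠ z) (hxz : x ≠ z) :
    ⁅skewSingle R x y, symmSingle R y z⁆ = symmSingle R x z := by
  simp [Ring.lie_def, skewSingle, symmSingle, sub_mul, mul_sub, add_mul, mul_add, hxy, hyz, hxz,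
    hxy.symm, hyz.symm, hxz.symm]

theorem lie_skewSingle_diagDiff (hxy : x ≠ y) (hyz : y ≠ z) (hxz : x ≠ z) :
    ⁅skewSingle R x y, diagDiff R y z⁆ = symmSingle R x y := by
  simp [Ring.lie_def, skewSingle, symmSingle, diagDiff, sub_mul, mul_sub, hxy, hyz, hxz, hxy.symm,
    hyz.symm, hxz.symm]

theorem lie_skewSingle_symmSingle_self (hxy : x ≠ y) :
    ⁅skewSingle R x y, symmSingle R x y⁆ = (2 : R) • diagDiff R x y := by
  simp [Ring.lie_def, skewSingle, symmSingle, diagDiff, sub_mul, mul_sub, add_mul, mul_add, hxy,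
    hxy.symm, two_smul]
  abel

theorem sum_skewSingle_mul_mul_skewSingle (x : Matrix n n R) :
    ∑ i : n, ∑ j : n, skewSingle R i j * x * skewSingle R i j =
      (2 : R) • xᵀ - (2 * trace x) • 1 := by
  ext a b
  simp only [skewSingle, sub_mul, mul_sub, single_mul_mul_single, Finset.sum_sub_distrib,
    Matrix.sub_apply, Matrix.sum_apply, single_apply, Matrix.smul_apply, one_apply,
    transpose_apply, trace, diag, ite_and, Finset.sum_ite_irrel, Finset.sum_ite_eq',
    Finset.mem_univ, if_true, Finset.sum_const_zero, one_mul, mul_one, smul_eq_mul]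
  split_ifs <;> ring

theorem sum_lie_lie_skewSingle (x : Matrix n n R) :
    ∑ i : n, ∑ j : n, ⁅skewSingle R i j, ⁅skewSingle R i j, x⁆⁆ =
      (4 - 4 * (Fintype.card n : R)) • x - (4 : R) • xᵀ + (4 * trace x) • 1 := by
  have h1 := sum_skewSingle_mul_mul_skewSingle (1 : Matrix n n R)
  simp only [mul_one, transpose_one, trace_one] at h1
  have expand : ∀ i j : n, ⁅skewSingle R i j, ⁅skewSingle R i j, x⁆⁆ =
      skewSingle R i j * skewSingle R i j * x - 2 • (skewSingle R i j * x * skewSingle R i j)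
        + x * (skewSingle R i j * skewSingle R i j) := by
    intro i j
    simp only [Ring.lie_def]
    noncomm_ring
  simp only [expand, Finset.sum_add_distrib, Finset.sum_sub_distrib, ← Finset.sum_mul,
    ← Finset.mul_sum, ← Finset.smul_sum, h1, sum_skewSingle_mul_mul_skewSingle]
  simp only [sub_mul, mul_sub, smul_mul_assoc, mul_smul_comm, one_mul, mul_one]
  module

/-- On symmetric matrices `ad(skewSingle p q)²` has eigenvalues `0`, `-1`, `-4`; this is
`12` times the projection onto the `-4`-eigenspace, spanned by `symmSingle p q` and
`diagDiff p q`. -/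
theorem lie_lie_add_self_of_symm {p q : n} (hpq : p ≠ q) {x : Matrix n n R} (hx : xᵀ = x) :
    ⁅skewSingle R p q, ⁅skewSingle R p q, ⁅skewSingle R p q, ⁅skewSingle R p q, x⁆⁆ + x⁆⁆ =
      (12 * x p q) • symmSingle R p q + (6 * (x p p - x q q)) • diagDiff R p q := by
  have hqp : x q p = x p q := by simpa using congrFun (congrFun hx p) q
  have hqp' := hpq.symm
  ext a b
  simp only [Matrix.add_apply, lie_skewSingle_apply, Matrix.smul_apply, symmSingle_apply,
    diagDiff_apply]
  by_cases hap : a = p <;> by_cases haq : a = q <;> by_cases hbp : b = p <;>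
    by_cases hbq : b = q <;>
    simp_all <;> ring

end ElementaryMatrices

section Subspaces

variable (n) (R : Type*) [CommRing R]

def skewSubmodule : Submodule R (Matrix n n R) where
  carrier := {x | xᵀ = -x}
  add_mem' {a b} ha hb := by simp_all [add_comm]
  zero_mem' := by simp
  smul_mem' c x hx := by simp_all

def symmSubmodule : Submodule R (Matrix n n R) where
  carrier := {x | xᵀ = x}
  add_mem' {a b} ha hb := by simp_all
  zero_mem' := by simp
  smul_mem' c x hx := by simp_all

def traceZero [Fintype n] : Submodule R (Matrix n n R) := LinearMap.ker (traceLinearMap n R R)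

variable {n R}

@[simp]
theorem mem_skewSubmodule {x : Matrix n n R} : x ∈ skewSubmodule n R ↔ xᵀ = -x := Iff.rfl

@[simp]
theorem mem_symmSubmodule {x : Matrix n n R} : x ∈ symmSubmodule n R ↔ xᵀ = x := Iff.rfl

@[simp]
theorem mem_traceZero [Fintype n] {x : Matrix n n R} : x ∈ traceZero n R ↔ trace x = 0 :=
  LinearMap.mem_ker

theorem coe_skewSubmodule : (skewSubmodule n R : Set (Matrix n n R)) = {x | xᵀ = -x} := rfl

theorem coe_symmSubmodule : (symmSubmodule n R : Set (Matrix n n R)) = {x | xᵀ = x} := rfl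

variable [DecidableEq n]

theorem coe_span_one_sup_skewSubmodule :
    ((Submodule.span R {1} ⊔ skewSubmodule n R : Submodule R (Matrix n n R)) : Set _) =
      {x | ∃ (c : R) (k : Matrix n n R), kᵀ = -k ∧ x = c • 1 + k} := by
  ext x
  simp only [SetLike.mem_coe, Submodule.mem_sup, Submodule.mem_span_singleton, mem_skewSubmodule,
    Set.mem_ofPred_eq]
  constructor
  · rintro ⟨_, ⟨c, rfl⟩, k, hk, rfl⟩
    exact ⟨c, k, hk, rfl⟩
  · rintro ⟨c, k, hk, rfl⟩
    exact ⟨_, ⟨c, rfl⟩, k, hk, rfl⟩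

theorem exists_ne_of_notMem_span_one {x : Matrix n n R} (hx : x ∉ Submodule.span R {1}) :
    ∃ p q, p ≠ q ∧ (x p q ≠ 0 ∨ x p p ≠ x q q) := by
  by_contra! h
  rcases isEmpty_or_nonempty n with hn | ⟨⟨i⟩⟩
  · exact hx (by simp [Subsingleton.elim x 0])
  refine hx (Submodule.mem_span_singleton.mpr ⟨x i i, ?_⟩)
  ext a b
  by_cases hab : a = b
  · subst hab
    by_cases hai : a = i
    · simp [hai]
    · simp [(h a i hai).2]
  · simp [one_apply, hab, (h a b hab).1]

variable [Fintype n]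

theorem le_sup_span_single_of_sub_mem (i : n) {M N : Submodule R (Matrix n n R)}
    (h : ∀ x ∈ N, x - trace x • single i i 1 ∈ M) : N ≤ M ⊔ Submodule.span R {single i i 1} :=
  fun x hx => Submodule.mem_sup.mpr ⟨_, h x hx, _,
    Submodule.smul_mem _ _ (Submodule.mem_span_singleton_self _), sub_add_cancel _ _⟩

theorem symmSubmodule_le_sup (i : n) : symmSubmodule n R ≤
    symmSubmodule n R ⊓ traceZero n R ⊔ Submodule.span R {single i i 1} :=
  le_sup_span_single_of_sub_mem i fun x (hx : xᵀ = x) => ⟨by simp [hx], by simp⟩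

theorem top_le_traceZero_sup (i : n) :
    ⊤ ≤ traceZero n R ⊔ Submodule.span R {single i i 1} :=
  le_sup_span_single_of_sub_mem i fun x _ => by simp

theorem traceZero_le_of_single_mem {M : Submodule R (Matrix n n R)}
    (hE : ∀ x y, x ≠ y → single x y (1 : R) ∈ M) (hD : ∀ x y, diagDiff R x y ∈ M) :
    traceZero n R ≤ M := by
  intro u hu
  rcases isEmpty_or_nonempty n with hn | ⟨⟨i⟩⟩
  · simp [Subsingleton.elim u 0]
  have htr : ∑ x, u x x = 0 := hu
  obtain ⟨v, hv, huv⟩ :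
      ∃ v : Matrix n n R, (∀ a, v a a = 0) ∧ u = v + ∑ x, u x x • diagDiff R x i :=
    ⟨u - ∑ x, u x x • diagDiff R x i,
      fun a => by simp [diagDiff_apply, Matrix.sum_apply, mul_sub, Finset.sum_sub_distrib, htr],
      (sub_add_cancel _ _).symm⟩
  rw [huv, matrix_eq_sum_single v]
  refine add_mem (sum_mem fun x _ => sum_mem fun y _ => ?_)
    (sum_mem fun x _ => M.smul_mem _ (hD x i))
  by_cases hxy : x = y
  · simp [hxy, hv]
  · simpa [smul_single] using M.smul_mem (v x y) (hE x y hxy)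

end Subspaces

section Generators

variable [Fintype n] {F : Type*} [Field F]

theorem traceZero_le_of_skewSubmodule_le (h2 : (2 : F) ≠ 0) {M : Submodule F (Matrix n n F)}
    (hK : skewSubmodule n F ≤ M) (hS : symmSubmodule n F ⊓ traceZero n F ≤ M) :
    traceZero n F ≤ M := by
  intro x (hx : trace x = 0)
  have hskew : x - xᵀ ∈ M := hK (by simp)
  have hsymm : x + xᵀ ∈ M := hS ⟨by simp [add_comm], by simp [hx]⟩
  have := M.smul_mem (2 : F)⁻¹ (M.add_mem hskew hsymm)
  rwa [sub_add_add_cancel, ← two_smul F x, smul_smul, inv_mul_cancel₀ h2, one_smul] at this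

variable [DecidableEq n]

theorem mem_span_one_sup_skewSubmodule_of_add_transpose_mem (h2 : (2 : F) ≠ 0)
    {l : Matrix n n F} (h : l + lᵀ ∈ Submodule.span F {1}) :
    l ∈ Submodule.span F {1} ⊔ skewSubmodule n F := by
  obtain ⟨c, hc⟩ := Submodule.mem_span_singleton.mp h
  refine Submodule.mem_sup.mpr ⟨(2⁻¹ * c) • 1,
    Submodule.smul_mem _ _ (Submodule.mem_span_singleton_self 1), (2 : F)⁻¹ • (l - lᵀ),
    Submodule.smul_mem _ _ (by simp : l - lᵀ ∈ skewSubmodule n F), ?_⟩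
  rw [mul_smul, hc, ← smul_add, add_add_sub_cancel, ← two_smul F l, smul_smul,
    inv_mul_cancel₀ h2, one_smul]

theorem skewSubmodule_le_of_skewSingle_mem (h2 : (2 : F) ≠ 0) {M : Submodule F (Matrix n n F)}
    (hK : ∀ x y, x ≠ y → skewSingle F x y ∈ M) : skewSubmodule n F ≤ M := by
  have hle : traceZero n F ≤
      M.comap (LinearMap.id - (transposeLinearEquiv n n F F).toLinearMap) :=
    traceZero_le_of_single_mem (fun x y hxy => by simpa [skewSingle] using hK x y hxy)
      (fun x y => by simp [diagDiff])
  intro u (hu : uᵀ = -u)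
  have htr : trace u = 0 := by
    have h := trace_transpose u
    rw [hu, trace_neg] at h
    exact (mul_eq_zero.mp (by linear_combination -h : (2 : F) * trace u = 0)).resolve_left h2
  have h2u : (2 : F) • u ∈ M := by
    simpa [hu, two_smul] using hle (mem_traceZero.mpr htr)
  simpa [h2] using M.smul_mem (2 : F)⁻¹ h2u

theorem symmSubmodule_inf_traceZero_le_of_symmSingle_mem (h2 : (2 : F) ≠ 0)
    {M : Submodule F (Matrix n n F)} (hS : ∀ x y, x ≠ y → symmSingle F x y ∈ M)
    (hD : ∀ x y, diagDiff F x y ∈ M) :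
    symmSubmodule n F ⊓ traceZero n F ≤ M := by
  have hle : traceZero n F ≤
      M.comap (LinearMap.id + (transposeLinearEquiv n n F F).toLinearMap) :=
    traceZero_le_of_single_mem (fun x y hxy => by simpa [symmSingle] using hS x y hxy)
      (fun x y => by simpa [diagDiff, ← two_smul F] using M.smul_mem 2 (hD x y))
  rintro u ⟨hu : uᵀ = u, htr⟩
  have h2u : (2 : F) • u ∈ M := by simpa [hu, two_smul] using hle htr
  simpa [h2] using M.smul_mem (2 : F)⁻¹ h2u

theorem span_commutators_eq :
    Submodule.span F {x : Matrix n n F | ∃ a b, x = a * b - b * a} = traceZero n F := by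
  apply le_antisymm
  · rw [Submodule.span_le]
    rintro _ ⟨a, b, rfl⟩
    rw [SetLike.mem_coe, mem_traceZero, trace_sub, trace_mul_comm, sub_self]
  · apply traceZero_le_of_single_mem
    · intro x y hxy
      exact Submodule.subset_span ⟨single x x 1, single x y 1, by simp [hxy.symm]⟩
    · intro x y
      exact Submodule.subset_span ⟨single x y 1, single y x 1, by simp [diagDiff]⟩

theorem span_symm_skew_commutators_eq (h2 : (2 : F) ≠ 0) :
    Submodule.span F {x : Matrix n n F | ∃ s k, sᵀ = s ∧ kᵀ = -k ∧ x = s * k - k * s} =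
      symmSubmodule n F ⊓ traceZero n F := by
  apply le_antisymm
  · rw [Submodule.span_le]
    rintro _ ⟨s, k, hs, hk, rfl⟩
    refine ⟨?_, ?_⟩
    · simp [transpose_sub, transpose_mul, hs, hk, neg_add_eq_sub]
    · rw [SetLike.mem_coe, mem_traceZero, trace_sub, trace_mul_comm, sub_self]
  · apply symmSubmodule_inf_traceZero_le_of_symmSingle_mem h2
    · intro x y hxy
      refine Submodule.subset_span ⟨single x x 1, skewSingle F x y, by simp,
        skewSingle_transpose x y, ?_⟩
      simp [skewSingle, symmSingle, mul_sub, sub_mul, hxy, Ne.symm hxy]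
    · intro x y
      by_cases hxy : x = y
      · simp [hxy, diagDiff]
      have hcomm : symmSingle F x y * skewSingle F x y - skewSingle F x y * symmSingle F x y =
          -(2 : F) • diagDiff F x y := by
        rw [← neg_sub, ← Ring.lie_def, lie_skewSingle_symmSingle_self hxy, neg_smul]
      have hD : diagDiff F x y = -(2 : F)⁻¹ •
          (symmSingle F x y * skewSingle F x y - skewSingle F x y * symmSingle F x y) := by
        rw [hcomm, smul_smul, neg_mul_neg, inv_mul_cancel₀ h2, one_smul]
      rw [hD]
      exact Submodule.smul_mem _ _ (Submodule.subset_span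
        ⟨_, _, symmSingle_transpose x y, skewSingle_transpose x y, rfl⟩)

end Generators

section LieSkewIdeal

variable [Fintype n] {R : Type*} [CommRing R]

def IsLieSkewIdeal (L : Submodule R (Matrix n n R)) : Prop :=
  ∀ l ∈ L, ∀ k : Matrix n n R, kᵀ = -k → l * k - k * l ∈ L

theorem isLieSkewIdeal_bot : IsLieSkewIdeal (⊥ : Submodule R (Matrix n n R)) := by
  intro l hl k _
  simp [(Submodule.mem_bot R).mp hl]

theorem isLieSkewIdeal_top : IsLieSkewIdeal (⊤ : Submodule R (Matrix n n R)) :=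
  fun _ _ _ _ => Submodule.mem_top

theorem isLieSkewIdeal_span_one [DecidableEq n] :
    IsLieSkewIdeal (Submodule.span R {(1 : Matrix n n R)}) := by
  intro l hl k _
  obtain ⟨c, rfl⟩ := Submodule.mem_span_singleton.mp hl
  simp

theorem isLieSkewIdeal_skewSubmodule : IsLieSkewIdeal (skewSubmodule n R) := by
  intro l (hl : lᵀ = -l) k hk
  simp [transpose_mul, hl, hk]

theorem isLieSkewIdeal_symmSubmodule : IsLieSkewIdeal (symmSubmodule n R) := by
  intro l (hl : lᵀ = l) k hk
  simp [transpose_mul, hl, hk, neg_add_eq_sub]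

theorem isLieSkewIdeal_traceZero : IsLieSkewIdeal (traceZero n R) := by
  intro l _ k _
  rw [mem_traceZero, trace_sub, trace_mul_comm, sub_self]

variable {L M : Submodule R (Matrix n n R)}

theorem IsLieSkewIdeal.inf (hL : IsLieSkewIdeal L) (hM : IsLieSkewIdeal M) :
    IsLieSkewIdeal (L ⊓ M) :=
  fun l hl k hk => ⟨hL l hl.1 k hk, hM l hl.2 k hk⟩

theorem IsLieSkewIdeal.sup (hL : IsLieSkewIdeal L) (hM : IsLieSkewIdeal M) :
    IsLieSkewIdeal (L ⊔ M) := by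
  intro x hx k hk
  obtain ⟨l, hl, m, hm, rfl⟩ := Submodule.mem_sup.mp hx
  rw [show (l + m) * k - k * (l + m) = (l * k - k * l) + (m * k - k * m) by noncomm_ring]
  exact add_mem (Submodule.mem_sup_left (hL l hl k hk)) (Submodule.mem_sup_right (hM m hm k hk))

theorem IsLieSkewIdeal.lie_mem (hL : IsLieSkewIdeal L) {k x : Matrix n n R} (hk : kᵀ = -k)
    (hx : x ∈ L) : ⁅k, x⁆ ∈ L := by
  simpa [Ring.lie_def] using L.neg_mem (hL x hx k hk)

variable [DecidableEq n]

theorem IsLieSkewIdeal.lie_skewSingle_mem (hL : IsLieSkewIdeal L) (p q : n)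
    {x : Matrix n n R} (hx : x ∈ L) : ⁅skewSingle R p q, x⁆ ∈ L :=
  hL.lie_mem (skewSingle_transpose p q) hx

theorem IsLieSkewIdeal.neg_lie_lie_mem (hL : IsLieSkewIdeal L) (p q : n) {x : Matrix n n R}
    (hx : x ∈ L) : -⁅skewSingle R p q, ⁅skewSingle R p q, x⁆⁆ ∈ L :=
  L.neg_mem (hL.lie_skewSingle_mem p q (hL.lie_skewSingle_mem p q hx))

theorem IsLieSkewIdeal.lie_lie_add_self_mem (hL : IsLieSkewIdeal L) (p q : n) {x : Matrix n n R}
    (hx : x ∈ L) :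
    ⁅skewSingle R p q, ⁅skewSingle R p q, ⁅skewSingle R p q, ⁅skewSingle R p q, x⁆⁆ + x⁆⁆ ∈ L :=
  hL.lie_skewSingle_mem p q <| hL.lie_skewSingle_mem p q <|
    L.add_mem (hL.lie_skewSingle_mem p q (hL.lie_skewSingle_mem p q hx)) hx

theorem IsLieSkewIdeal.transpose_sub_trace_smul_one_mem {F : Type*} [Field F]
    {L : Submodule F (Matrix n n F)} (hL : IsLieSkewIdeal L)
    (h2 : (2 : F) ≠ 0) {l : Matrix n n F} (hl : l ∈ L) : lᵀ - trace l • 1 ∈ L := by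
  have hsum : ∑ i : n, ∑ j : n, ⁅skewSingle F i j, ⁅skewSingle F i j, l⁆⁆ ∈ L :=
    L.sum_mem fun i _ => L.sum_mem fun j _ =>
      hL.lie_skewSingle_mem i j (hL.lie_skewSingle_mem i j hl)
  rw [sum_lie_lie_skewSingle] at hsum
  have h4 : (4 : F) ≠ 0 := by simpa [show (4 : F) = 2 * 2 by norm_num] using h2
  have key : lᵀ - trace l • 1 = (1 - (Fintype.card n : F)) • l - (4 : F)⁻¹ •
      ((4 - 4 * (Fintype.card n : F)) • l - (4 : F) • lᵀ + (4 * trace l) • 1) := by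
    match_scalars <;> field_simp
    ring
  rw [key]
  exact L.sub_mem (L.smul_mem _ hl) (L.smul_mem _ hsum)

end LieSkewIdeal

section SkewPart

variable {R : Type*} [CommRing R]

def restrictEntries (P : n → n → Prop) [DecidableRel P] (x : Matrix n n R) : Matrix n n R :=
  of fun a b => if P a b then x a b else 0

@[simp]
theorem restrictEntries_apply (P : n → n → Prop) [DecidableRel P] (x : Matrix n n R) (a b : n) :
    restrictEntries P x a b = if P a b then x a b else 0 := rfl

def Crosses (p q a b : n) : Prop := Xor (a = p ∨ a = q) (b = p ∨ b = q)

theorem crosses_comm {p q a b : n} : Crosses p q b a ↔ Crosses p q a b := by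
  unfold Crosses
  rw [xor_comm]

variable [DecidableEq n]

instance (p q : n) : DecidableRel (Crosses p q) :=
  fun _ _ => inferInstanceAs (Decidable (Xor _ _))

theorem restrictEntries_eq_smul_skewSingle {P : n → n → Prop} [DecidableRel P] {w : Matrix n n R}
    (hw : wᵀ = -w) (hdiag : ∀ a, w a a = 0) {p q : n} (hpq : p ≠ q) (hPpq : P p q)
    (hPqp : P q p) (hP : ∀ a b, a ≠ b → P a b → (a = p ∧ b = q) ∨ (a = q ∧ b = p)) :
    restrictEntries P w = w p q • skewSingle R p q := by
  have hqp : w q p = -w p q := by simpa using congrFun (congrFun hw p) q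
  ext a b
  by_cases hab : a = b
  · subst hab
    simp [hdiag, skewSingle_apply, and_comm]
  by_cases h : P a b
  · rcases hP a b hab h with ⟨rfl, rfl⟩ | ⟨rfl, rfl⟩ <;>
      simp [h, skewSingle_apply, hpq, hpq.symm, hqp]
  · have hpq' : ¬(a = p ∧ b = q) := fun ⟨ha, hb⟩ => h (ha ▸ hb ▸ hPpq)
    have hqp' : ¬(a = q ∧ b = p) := fun ⟨ha, hb⟩ => h (ha ▸ hb ▸ hPqp)
    simp [h, skewSingle_apply, hpq', hqp']

theorem restrictEntries_crosses_eq {w : Matrix n n R} (hw : wᵀ = -w) (hdiag : ∀ a, w a a = 0)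
    {p q r r' r'' : n} (hpq : p ≠ q) (hrq : r ≠ q) (hr'q : r' ≠ q) (hr''q : r'' ≠ q)
    (hrr' : r ≠ r') (hrr'' : r ≠ r'') (hr'r'' : r' ≠ r'') :
    restrictEntries (fun a b => Crosses p r'' a b ∧ Crosses p r' a b ∧ Crosses p r a b ∧
      ¬Crosses p q a b) w = w p q • skewSingle R p q := by
  refine restrictEntries_eq_smul_skewSingle hw hdiag hpq (by unfold Crosses; grind)
    (by unfold Crosses; grind) fun a b hab h => ?_
  unfold Crosses at h
  grind

variable [Fintype n]

theorem neg_lie_lie_skewSingle {p q : n} (hpq : p ≠ q) {x : Matrix n n R} (hx : xᵀ = -x)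
    (hdiag : ∀ a, x a a = 0) :
    -⁅skewSingle R p q, ⁅skewSingle R p q, x⁆⁆ = restrictEntries (Crosses p q) x := by
  have hqp : x q p = -x p q := by simpa using congrFun (congrFun hx p) q
  have hpp := hdiag p
  have hqq := hdiag q
  have hqp' := hpq.symm
  ext a b
  simp only [Matrix.neg_apply, lie_skewSingle_apply, restrictEntries_apply, Crosses]
  by_cases hap : a = p <;> by_cases haq : a = q <;> by_cases hbp : b = p <;>
    by_cases hbq : b = q <;>
    simp_all

theorem add_lie_lie_skewSingle {p q : n} (hpq : p ≠ q) {x : Matrix n n R} (hx : xᵀ = -x)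
    (hdiag : ∀ a, x a a = 0) :
    x + ⁅skewSingle R p q, ⁅skewSingle R p q, x⁆⁆ =
      restrictEntries (fun a b => ¬Crosses p q a b) x := by
  rw [← sub_neg_eq_add, neg_lie_lie_skewSingle hpq hx hdiag]
  ext a b
  by_cases h : Crosses p q a b <;> simp [h]

theorem neg_lie_lie_skewSingle_restrictEntries {P : n → n → Prop} [DecidableRel P]
    (hP : ∀ a b, P b a ↔ P a b) {w : Matrix n n R} (hw : wᵀ = -w) (hdiag : ∀ a, w a a = 0)
    {p q : n} (hpq : p ≠ q) :
    -⁅skewSingle R p q, ⁅skewSingle R p q, restrictEntries P w⁆⁆ =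
      restrictEntries (fun a b => Crosses p q a b ∧ P a b) w := by
  have hskew : (restrictEntries P w)ᵀ = -restrictEntries P w := by
    ext a b
    have hab : w b a = -w a b := by simpa using congrFun (congrFun hw a) b
    by_cases h : P a b <;> simp [hP, h, hab]
  rw [neg_lie_lie_skewSingle hpq hskew (by simp [hdiag])]
  ext a b
  simp [ite_and]

theorem restrictEntries_not_crosses_eq_of_card_eq_three (hn : Fintype.card n = 3)
    {w : Matrix n n R} (hw : wᵀ = -w) (hdiag : ∀ a, w a a = 0) {p q : n} (hpq : p ≠ q) :
    restrictEntries (fun a b => ¬Crosses p q a b) w = w p q • skewSingle R p q := by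
  obtain ⟨r, hrp, hrq⟩ := Fintype.exists_ne_ne_of_card_ne_two (by omega) hpq
  have huniv : ({p, q, r} : Finset n) = Finset.univ := Finset.eq_univ_of_card _
    (hn ▸ Finset.card_eq_three.mpr ⟨p, q, r, hpq, hrp.symm, hrq.symm, rfl⟩)
  have hall : ∀ a, a = p ∨ a = q ∨ a = r := fun a => by simpa [← huniv] using Finset.mem_univ a
  refine restrictEntries_eq_smul_skewSingle hw hdiag hpq (by simp [Crosses]) (by simp [Crosses])
    fun a b hab h => ?_
  have := hall a
  have := hall b
  unfold Crosses at h
  grind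

end SkewPart

section Extraction

variable [Fintype n] [DecidableEq n]

theorem IsLieSkewIdeal.exists_smul_skewSingle_add_smul_one_mem {R : Type*} [CommRing R]
    {L : Submodule R (Matrix n n R)} (hL : IsLieSkewIdeal L)
    (hn : Fintype.card n = 3 ∨ 5 ≤ Fintype.card n) {w : Matrix n n R} (hw : wᵀ = -w)
    (hdiag : ∀ a, w a a = 0) {p q : n} (hpq : p ≠ q) {c : R} (hv : w + c • 1 ∈ L) :
    ∃ e : R, w p q • skewSingle R p q + e • 1 ∈ L := by
  have hv₁ : restrictEntries (fun a b => ¬Crosses p q a b) w + c • 1 ∈ L := by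
    have := L.add_mem hv (hL.lie_skewSingle_mem p q (hL.lie_skewSingle_mem p q hv))
    rwa [lie_add_smul_one, add_right_comm, add_lie_lie_skewSingle hpq hw hdiag] at this
  rcases hn with hn | hn
  · exact ⟨c, by rwa [restrictEntries_not_crosses_eq_of_card_eq_three hn hw hdiag hpq] at hv₁⟩
  obtain ⟨r, hr, r', hr', r'', hr'', hrr', hrr'', hr'r''⟩ :=
    (Finset.two_lt_card (s := (Finset.univ.erase p).erase q)).mp (by
      rw [Finset.card_erase_of_mem (by simpa using hpq.symm),
        Finset.card_erase_of_mem (Finset.mem_univ p), Finset.card_univ]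
      omega)
  simp only [Finset.mem_erase, Finset.mem_univ, and_true] at hr hr' hr''
  have hv₂ := hL.neg_lie_lie_mem p r hv₁
  rw [lie_add_smul_one, neg_lie_lie_skewSingle_restrictEntries (by simp [crosses_comm]) hw hdiag
    hr.2.symm] at hv₂
  have hv₃ := hL.neg_lie_lie_mem p r' hv₂
  rw [neg_lie_lie_skewSingle_restrictEntries (by simp [crosses_comm]) hw hdiag hr'.2.symm] at hv₃
  have hv₄ := hL.neg_lie_lie_mem p r'' hv₃
  rw [neg_lie_lie_skewSingle_restrictEntries (by simp [crosses_comm]) hw hdiag hr''.2.symm,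
    restrictEntries_crosses_eq hw hdiag hpq hr.1 hr'.1 hr''.1 hrr' hrr'' hr'r''] at hv₄
  exact ⟨0, by simpa using hv₄⟩

variable {F : Type*} [Field F] {L : Submodule F (Matrix n n F)}

theorem IsLieSkewIdeal.exists_skewSingle_mem (hL : IsLieSkewIdeal L) (h2 : (2 : F) ≠ 0)
    (hn2 : Fintype.card n ≠ 2) (hn4 : Fintype.card n ≠ 4) {l : Matrix n n F} (hl : l ∈ L)
    (hnsymm : lᵀ ≠ l) : ∃ a b, a ≠ b ∧ skewSingle F a b ∈ L := by
  set w := l - lᵀ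
  have hw : wᵀ = -w := by simp [w]
  have hdiag : ∀ a, w a a = 0 := by simp [w]
  obtain ⟨p, q, hwpq⟩ : ∃ p q, w p q ≠ 0 := by
    by_contra! h
    exact hnsymm (by ext a b; simpa [w, sub_eq_zero, eq_comm] using h b a)
  have hpq : p ≠ q := by
    rintro rfl
    exact hwpq (hdiag p)
  have hn : Fintype.card n = 3 ∨ 5 ≤ Fintype.card n := by
    have := Fintype.one_lt_card_iff.mpr ⟨p, q, hpq⟩
    omega
  have hv : w + trace l • 1 ∈ L := by
    simpa [w, sub_sub_eq_add_sub, add_sub_right_comm] using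
      L.sub_mem hl (hL.transpose_sub_trace_smul_one_mem h2 hl)
  obtain ⟨e, he⟩ := hL.exists_smul_skewSingle_add_smul_one_mem hn hw hdiag hpq hv
  obtain ⟨r, hrp, hrq⟩ := Fintype.exists_ne_ne_of_card_ne_two hn2 hpq
  have hrq_mem := hL.lie_skewSingle_mem r p he
  rw [lie_add_smul_one, lie_smul_right, lie_skewSingle_skewSingle hrp hpq hrq] at hrq_mem
  exact ⟨r, q, hrq, by simpa [hwpq] using L.smul_mem (w p q)⁻¹ hrq_mem⟩

theorem IsLieSkewIdeal.skewSubmodule_le (hL : IsLieSkewIdeal L) (h2 : (2 : F) ≠ 0)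
    (hn2 : Fintype.card n ≠ 2) (hn4 : Fintype.card n ≠ 4) (hS : ¬L ≤ symmSubmodule n F) :
    skewSubmodule n F ≤ L := by
  obtain ⟨l, hl, hls⟩ := SetLike.not_le_iff_exists.mp hS
  obtain ⟨a, b, hab, h⟩ := hL.exists_skewSingle_mem h2 hn2 hn4 hl hls
  refine skewSubmodule_le_of_skewSingle_mem h2 <|
    forall_ne_of_symm_of_step (P := fun x y => skewSingle F x y ∈ L) ?_ ?_ hab h
  · intro x y hxy
    simpa [skewSingle_swap x y] using L.neg_mem hxy
  · intro x y z hxy hxz hyz hyz_mem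
    simpa [lie_skewSingle_skewSingle hxy hyz hxz] using hL.lie_skewSingle_mem x y hyz_mem

theorem IsLieSkewIdeal.symmSingle_mem_of_apply_ne_zero (hL : IsLieSkewIdeal L)
    (h12 : (12 : F) ≠ 0) {y : Matrix n n F} (hy : y ∈ L) (hsymm : yᵀ = y) {a b : n} (hab : a ≠ b)
    (hyab : y a b ≠ 0) (hdiag : y a a = y b b) : symmSingle F a b ∈ L := by
  have h := hL.lie_lie_add_self_mem a b hy
  rw [lie_lie_add_self_of_symm hab hsymm, hdiag, sub_self, mul_zero, zero_smul, add_zero] at h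
  have := L.smul_mem (12 * y a b)⁻¹ h
  rwa [smul_smul, inv_mul_cancel₀ (mul_ne_zero h12 hyab), one_smul] at this

theorem IsLieSkewIdeal.exists_symmSingle_mem (hL : IsLieSkewIdeal L) (h2 : (2 : F) ≠ 0)
    (h3 : (3 : F) ≠ 0) (hn2 : Fintype.card n ≠ 2) {s : Matrix n n F} (hs : s ∈ L)
    (hsymm : sᵀ = s) (hns : s ∉ Submodule.span F {1}) :
    ∃ a b, a ≠ b ∧ symmSingle F a b ∈ L := by
  obtain ⟨p, q, hpq, hne⟩ := exists_ne_of_notMem_span_one hns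
  obtain ⟨r, hrp, hrq⟩ := Fintype.exists_ne_ne_of_card_ne_two hn2 hpq
  have hy := hL.lie_skewSingle_mem r q (hL.lie_lie_add_self_mem p q hs)
  rw [lie_lie_add_self_of_symm hpq hsymm, symmSingle_swap q p, diagDiff_swap q p, smul_neg,
    ← neg_smul, lie_add_right, lie_smul_right, lie_smul_right,
    lie_skewSingle_symmSingle hrq hpq.symm hrp, lie_skewSingle_diagDiff hrq hpq.symm hrp] at hy
  set y := (12 * s p q) • symmSingle F r p + -(6 * (s p p - s q q)) • symmSingle F r q
  have hysymm : yᵀ = y := by simp [y, symmSingle_transpose]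
  have h6 : (6 : F) ≠ 0 := by
    rw [show (6 : F) = 2 * 3 by norm_num]
    exact mul_ne_zero h2 h3
  have h12 : (12 : F) ≠ 0 := by
    rw [show (12 : F) = 2 * 6 by norm_num]
    exact mul_ne_zero h2 h6
  rcases hne with hne | hne
  · refine ⟨r, p, hrp, hL.symmSingle_mem_of_apply_ne_zero h12 hy hysymm hrp ?_ ?_⟩
    · simpa [y, symmSingle_apply, hrp, hrq, hpq] using ⟨h12, hne⟩
    · simp [y, symmSingle_apply, hrp, hrq, hrp.symm, hpq]
  · refine ⟨r, q, hrq, hL.symmSingle_mem_of_apply_ne_zero h12 hy hysymm hrq ?_ ?_⟩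
    · simpa [y, symmSingle_apply, hrp, hrq, hpq.symm, sub_eq_zero] using ⟨h6, hne⟩
    · simp [y, symmSingle_apply, hrp, hrq, hrq.symm, hpq.symm]

theorem IsLieSkewIdeal.symmSubmodule_inf_traceZero_le (hL : IsLieSkewIdeal L) (h2 : (2 : F) ≠ 0)
    (h3 : (3 : F) ≠ 0) (hn2 : Fintype.card n ≠ 2) {s : Matrix n n F} (hs : s ∈ L)
    (hsymm : sᵀ = s) (hns : s ∉ Submodule.span F {1}) :
    symmSubmodule n F ⊓ traceZero n F ≤ L := by
  obtain ⟨a, b, hab, h⟩ := hL.exists_symmSingle_mem h2 h3 hn2 hs hsymm hns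
  have hS : ∀ x y, x ≠ y → symmSingle F x y ∈ L := by
    refine forall_ne_of_symm_of_step (P := fun x y => symmSingle F x y ∈ L) ?_ ?_ hab h
    · intro x y hxy
      rwa [symmSingle_swap]
    · intro x y z hxy hxz hyz hyz_mem
      simpa [lie_skewSingle_symmSingle hxy hyz hxz] using hL.lie_skewSingle_mem x y hyz_mem
  refine symmSubmodule_inf_traceZero_le_of_symmSingle_mem h2 hS fun x y => ?_
  by_cases hxy : x = y
  · simp [hxy, diagDiff]
  have hD := hL.lie_skewSingle_mem x y (hS x y hxy)
  rw [lie_skewSingle_symmSingle_self hxy] at hD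
  simpa [h2] using L.smul_mem (2 : F)⁻¹ hD

end Extraction

theorem isLieSkewIdeal_iff [Fintype n] [DecidableEq n] [Nonempty n] {F : Type*} [Field F]
    (h2 : (2 : F) ≠ 0) (h3 : (3 : F) ≠ 0) (hn2 : Fintype.card n ≠ 2) (hn4 : Fintype.card n ≠ 4)
    (L : Submodule F (Matrix n n F)) :
    IsLieSkewIdeal L ↔ L = ⊥ ∨ L = Submodule.span F {1} ∨ L = skewSubmodule n F ∨
      L = symmSubmodule n F ⊓ traceZero n F ∨ L = symmSubmodule n F ∨
      L = Submodule.span F {1} ⊔ skewSubmodule n F ∨ L = traceZero n F ∨ L = ⊤ := by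
  constructor
  · intro hL
    obtain ⟨i⟩ := ‹Nonempty n›
    by_cases hS : L ≤ symmSubmodule n F
    · by_cases hZ : L ≤ Submodule.span F {1}
      · rcases Submodule.eq_or_eq_of_le_sup_span_singleton (v := 1) (by simp) bot_le hZ
          with h | h <;> simp [h]
      obtain ⟨s, hs, hsZ⟩ := SetLike.not_le_iff_exists.mp hZ
      rcases Submodule.eq_or_eq_of_le_sup_span_singleton (symmSubmodule_le_sup i)
        (hL.symmSubmodule_inf_traceZero_le h2 h3 hn2 hs (hS hs) hsZ) hS with h | h <;> simp [h]
    have hK := hL.skewSubmodule_le h2 hn2 hn4 hS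
    by_cases hZK : L ≤ Submodule.span F {1} ⊔ skewSubmodule n F
    · rcases Submodule.eq_or_eq_of_le_sup_span_singleton (sup_comm _ _).le hK hZK
        with h | h <;> simp [h]
    obtain ⟨l, hl, hlZK⟩ := SetLike.not_le_iff_exists.mp hZK
    have hl' : l + lᵀ ∈ L := by
      simpa [two_smul, add_sub_assoc] using
        L.sub_mem (L.smul_mem 2 hl) (hK (by simp : l - lᵀ ∈ skewSubmodule n F))
    have hS0 := hL.symmSubmodule_inf_traceZero_le h2 h3 hn2 hl' (by simp [add_comm])
      (fun h => hlZK (mem_span_one_sup_skewSubmodule_of_add_transpose_mem h2 h))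
    rcases Submodule.eq_or_eq_of_le_sup_span_singleton (top_le_traceZero_sup i)
      (traceZero_le_of_skewSubmodule_le h2 hK hS0) le_top with h | h <;> simp [h]
  · rintro (rfl | rfl | rfl | rfl | rfl | rfl | rfl | rfl)
    exacts [isLieSkewIdeal_bot, isLieSkewIdeal_span_one, isLieSkewIdeal_skewSubmodule,
      isLieSkewIdeal_symmSubmodule.inf isLieSkewIdeal_traceZero, isLieSkewIdeal_symmSubmodule,
      isLieSkewIdeal_span_one.sup isLieSkewIdeal_skewSubmodule, isLieSkewIdeal_traceZero,
      isLieSkewIdeal_top]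

end TransposeInvolution

/-- **Lemma 3.6.** Let `F` be a field with `char F ≠ 2, 3`, let `d` be a positive integer
with `d ≠ 2, 4`, and let `A = M_d(F)` carry the transpose involution.  Then `A` has
exactly eight Lie skew-ideals: `0`, the scalar matrices `Z = F·I`, the skew-symmetric
matrices `K`, the span `[S,K]` of commutators of symmetric with skew-symmetric matrices,
the symmetric matrices `S`, `Z + K`, the span `[A,A]` of all commutators, and `A`.
Formalized: an `F`-subspace `L` is a Lie skew-ideal iff it is one of the eight. -/
theorem stmt_5 (F : Type*) [Field F] (hchar2 : ringChar F ≠ 2) (hchar3 : ringChar F ≠ 3)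
    (d : ℕ) (hd : 0 < d) (hd2 : d ≠ 2) (hd4 : d ≠ 4)
    (L : Submodule F (Matrix (Fin d) (Fin d) F)) :
    (∀ l ∈ L, ∀ k : Matrix (Fin d) (Fin d) F, kᵀ = -k → l * k - k * l ∈ L) ↔
      (L = ⊥ ∨
       L = Submodule.span F {(1 : Matrix (Fin d) (Fin d) F)} ∨
       (L : Set (Matrix (Fin d) (Fin d) F)) = {k | kᵀ = -k} ∨
       L = Submodule.span F
         {x : Matrix (Fin d) (Fin d) F | ∃ s k, sᵀ = s ∧ kᵀ = -k ∧ x = s * k - k * s} ∨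
       (L : Set (Matrix (Fin d) (Fin d) F)) = {s | sᵀ = s} ∨
       (L : Set (Matrix (Fin d) (Fin d) F)) =
         {x | ∃ (c : F) (k : Matrix (Fin d) (Fin d) F), kᵀ = -k ∧ x = c • 1 + k} ∨
       L = Submodule.span F
         {x : Matrix (Fin d) (Fin d) F | ∃ a b, x = a * b - b * a} ∨
       L = ⊤) := by
  have h2 : (2 : F) ≠ 0 := Ring.two_ne_zero hchar2
  have h3 : (3 : F) ≠ 0 := by
    exact_mod_cast Ring.natCast_ne_zero_of_ringChar_ne Nat.prime_three hchar3
  have : Nonempty (Fin d) := ⟨⟨0, hd⟩⟩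
  rw [← TransposeInvolution.coe_skewSubmodule, ← TransposeInvolution.coe_symmSubmodule,
    ← TransposeInvolution.coe_span_one_sup_skewSubmodule,
    TransposeInvolution.span_symm_skew_commutators_eq h2, TransposeInvolution.span_commutators_eq]
  simp only [SetLike.coe_set_eq]
  exact TransposeInvolution.isLieSkewIdeal_iff h2 h3 (by simpa using hd2) (by simpa using hd4) L
end

section
/- Let F be a field with char(F) ≠ 2 and let A = M_d(F). If M is an F-linear subspace of A such that M·Aᵗ + A·M ∈ M for all M ∈ M and all A ∈ A, then M is either 0, the set K of skew-symmetric matrices, the set S of symmetric matrices, or A. -/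
/-!
Applying the condition twice, with matrix units `E i j`, turns any `m ∈ M` into
`m e b • E c a + m b e • E a c` for `e ≠ a`. If `s ∈ M` is nonzero with `sᵀ = ε • s`, `ε = ±1`,
these are nonzero multiples of `E c a + ε • E a c`, which span the `ε`-eigenspace of
transposition; hence `M ∩ S` is `0` or `S`, and `M ∩ K` is `0` or `K`. Taking `c = a` shows that
`M ∩ S = 0` forces every element of `M` to be skew, and `x = (x + xᵀ)/2 + (x - xᵀ)/2` sorts out
the four cases. For `d ≤ 1` the space of matrices has dimension at most one.
-/

open Matrix

namespace Matrix

variable {F n : Type*} [Field F] [Fintype n] [DecidableEq n]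

-- `m ↦ m * aᵀ + a * m` is the action of `𝔤𝔩_n` on bilinear forms, the derivative of the
-- congruence `m ↦ g * m * gᵀ`.
def IsGlInvariant (M : Submodule F (Matrix n n F)) : Prop :=
  ∀ m ∈ M, ∀ a : Matrix n n F, m * aᵀ + a * m ∈ M

lemma sum_smul_single_add_smul_single (x : Matrix n n F) (ε : F) :
    ∑ p, ∑ q, x p q • (single p q (1 : F) + ε • single q p 1) = x + ε • xᵀ := by
  ext i j
  simp [sum_apply, single_apply, Finset.sum_add_distrib, ite_and, mul_comm]

lemma mem_of_forall_single_add_smul_single_mem {M : Submodule F (Matrix n n F)} {ε : F}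
    (h2 : (2 : F) ≠ 0) (hε : ε * ε = 1) (hE : ∀ p q, single p q (1 : F) + ε • single q p 1 ∈ M)
    {x : Matrix n n F} (hx : xᵀ = ε • x) : x ∈ M := by
  have hsum : (2 : F) • x ∈ M := by
    rw [show (2 : F) • x = x + ε • xᵀ by rw [hx, smul_smul, hε, one_smul, two_smul],
      ← sum_smul_single_add_smul_single]
    exact M.sum_mem fun p _ => M.sum_mem fun q _ => M.smul_mem _ (hE p q)
  simpa [smul_smul, h2] using M.smul_mem (2 : F)⁻¹ hsum

namespace IsGlInvariant

variable {M : Submodule F (Matrix n n F)}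

lemma smul_single_add_smul_single_mem (hM : IsGlInvariant M) {m : Matrix n n F} (hm : m ∈ M)
    {a e : n} (hae : e ≠ a) (b c : n) :
    m e b • single c a (1 : F) + m b e • single a c 1 ∈ M := by
  convert hM _ (hM m hm (single a b 1)) (single c e 1) using 1
  have h₁ : single b a (1 : F) * single e c 1 = 0 := by simp [hae.symm]
  have h₂ : single c e (1 : F) * single a b 1 = 0 := by simp [hae]
  simp only [transpose_single, add_mul, mul_add, mul_assoc m, h₁, ← mul_assoc _ _ m, h₂]
  simp [← mul_assoc, add_comm]

lemma single_add_smul_single_mem [Nontrivial n] (hM : IsGlInvariant M) {ε : F} (hε : ε * ε = 1)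
    {s : Matrix n n F} (hs : s ∈ M) (hsT : sᵀ = ε • s) (hs0 : s ≠ 0) (p q : n) :
    single p q (1 : F) + ε • single q p 1 ∈ M := by
  obtain ⟨i, j, hij⟩ : ∃ i j, s i j ≠ 0 := by simpa [← Matrix.ext_iff] using hs0
  have hji : s j i = ε * s i j := by
    have := congrFun (congrFun hsT j) i
    simp only [transpose_apply, smul_apply, smul_eq_mul] at this
    rw [this, ← mul_assoc, hε, one_mul]
  have off_diag : ∀ p q, q ≠ i → single p q (1 : F) + ε • single q p 1 ∈ M := by
    intro p q hq
    have := M.smul_mem (s i j)⁻¹ (hM.smul_single_add_smul_single_mem hs hq.symm j p)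
    simpa [hji, smul_add, smul_smul, hij, mul_comm ε] using this
  by_cases hq : q = i
  · subst hq
    by_cases hp : p = q
    · subst hp
      obtain ⟨a, ha⟩ := exists_ne p
      convert hM _ (off_diag p a ha) (single p a 1) using 1
      simp [add_mul, mul_add, ha, Ne.symm ha]
    · convert M.smul_mem ε (off_diag q p hp) using 1
      rw [smul_add, smul_smul, hε, one_smul, add_comm]
  · exact off_diag p q hq

lemma eq_zero_or_mem [Nontrivial n] (hM : IsGlInvariant M) (h2 : (2 : F) ≠ 0) {ε : F}
    (hε : ε * ε = 1) :
    (∀ x ∈ M, xᵀ = ε • x → x = 0) ∨ ∀ x : Matrix n n F, xᵀ = ε • x → x ∈ M := by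
  refine or_iff_not_imp_left.2 fun h => ?_
  push Not at h
  obtain ⟨s, hs, hsT, hs0⟩ := h
  exact fun x => mem_of_forall_single_add_smul_single_mem h2 hε
    (hM.single_add_smul_single_mem hε hs hsT hs0)

lemma transpose_eq_neg [Nontrivial n] (hM : IsGlInvariant M) (hS : ∀ x ∈ M, xᵀ = x → x = 0)
    {m : Matrix n n F} (hm : m ∈ M) : mᵀ = -m := by
  ext i j
  obtain ⟨a, ha⟩ := exists_ne j
  have hdiag := hS _ (hM.smul_single_add_smul_single_mem hm ha.symm i a) (by simp)
  have := congrFun (congrFun hdiag a) a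
  simp only [add_apply, smul_apply, single_apply_same, smul_eq_mul, mul_one,
    zero_apply] at this
  simp only [transpose_apply, neg_apply]
  linear_combination this

theorem eq_bot_or_skew_or_symm_or_top [Nontrivial n] (hM : IsGlInvariant M) (h2 : (2 : F) ≠ 0) :
    M = ⊥ ∨ (M : Set (Matrix n n F)) = {x | xᵀ = -x} ∨
      (M : Set (Matrix n n F)) = {x | xᵀ = x} ∨ M = ⊤ := by
  have hsymm := hM.eq_zero_or_mem h2 (one_mul 1)
  have hskew := hM.eq_zero_or_mem h2 (by norm_num : (-1 : F) * -1 = 1)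
  simp only [one_smul, neg_one_smul] at hsymm hskew
  rcases hsymm with hS0 | hS <;> rcases hskew with hK0 | hK
  · exact .inl <| (Submodule.eq_bot_iff M).2 fun m hm => hK0 m hm (hM.transpose_eq_neg hS0 hm)
  · exact .inr <| .inl <| Set.ext fun x => ⟨hM.transpose_eq_neg hS0, hK x⟩
  · refine .inr <| .inr <| .inl <| Set.ext fun x => ⟨fun hx => ?_, hS x⟩
    have hxT : xᵀ ∈ M := by
      simpa using M.sub_mem (hS (x + xᵀ) (by simp [add_comm])) hx
    have := hK0 _ (M.sub_mem hx hxT) (by simp)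
    exact (sub_eq_zero.1 this).symm
  · refine .inr <| .inr <| .inr <| M.eq_top_iff'.2 fun x => ?_
    have hx : x = (2 : F)⁻¹ • (x + xᵀ) + (2 : F)⁻¹ • (x - xᵀ) := by
      rw [← smul_add, add_add_sub_cancel, ← two_smul F, smul_smul, inv_mul_cancel₀ h2, one_smul]
    rw [hx]
    exact M.add_mem (M.smul_mem _ (hS _ (by simp [add_comm])))
      (M.smul_mem _ (hK _ (by simp)))

end IsGlInvariant

end Matrix

/-- **Lemma 3.7 (after Montgomery).** Let `F` be a field with `char F ≠ 2` and
`A = M_d(F)`.  If `M` is an `F`-linear subspace of `A` such that `m·aᵀ + a·m ∈ M` for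
all `m ∈ M` and `a ∈ A`, then `M` is either `0`, the skew-symmetric matrices `K`,
the symmetric matrices `S`, or `A`. -/
theorem stmt_6 (F : Type*) [Field F] (hchar : ringChar F ≠ 2) (d : ℕ)
    (M : Submodule F (Matrix (Fin d) (Fin d) F))
    (hM : ∀ m ∈ M, ∀ a : Matrix (Fin d) (Fin d) F, m * aᵀ + a * m ∈ M) :
    M = ⊥ ∨
    (M : Set (Matrix (Fin d) (Fin d) F)) = {x | xᵀ = -x} ∨
    (M : Set (Matrix (Fin d) (Fin d) F)) = {x | xᵀ = x} ∨
    M = ⊤ := by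
  rcases lt_or_ge d 2 with hd | hd
  · interval_cases d
    · exact .inl M.eq_bot_of_subsingleton
    · have : IsSimpleOrder (Submodule F (Matrix (Fin 1) (Fin 1) F)) :=
        is_simple_module_of_finrank_eq_one (by rw [Module.finrank_matrix (R := F) (M := F)]; simp)
      exact (eq_bot_or_eq_top M).imp_right fun h => .inr <| .inr h
  · have : Nontrivial (Fin d) := Fin.nontrivial_iff_two_le.2 hd
    exact Matrix.IsGlInvariant.eq_bot_or_skew_or_symm_or_top hM (Ring.two_ne_zero hchar)
end

section
/- Let A be a finite-dimensional central simple algebra over a field F with char(F) ≠ 2, equipped with an involution * of the second kind, i.e., an additive, antimultiplicative, involutive map * : A → A that maps the center Z = F·1 into itself but does not fix Z pointwise. Then every Lie skew-ideal L of A is either 0, Z, the F-linear span [A,A] of all commutators, or A. -/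
section Aux

variable {F A : Type*} [Field F] [Ring A] [Algebra F A]

/-- In a simple ring, the `F`-span of `{x*c*y}` for a fixed `c ≠ 0` is everything. -/
lemma aux_span_xcy_eq_top [IsSimpleRing A] (c : A) (hc : c ≠ 0) :
    Submodule.span F {t : A | ∃ x y : A, t = x * c * y} = ⊤ := by
  set S := Submodule.span F {t : A | ∃ x y : A, t = x * c * y} with hSdef
  have hgen : ∀ p q : A, p * c * q ∈ S := fun p q => Submodule.subset_span ⟨p, q, rfl⟩
  have hml : ∀ (r : A) (a : A), a ∈ S → r * a ∈ S := by
    intro r a ha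
    induction ha using Submodule.span_induction with
    | mem x hx =>
        obtain ⟨p, q, rfl⟩ := hx
        have h : r * (p * c * q) = (r * p) * c * q := by simp [mul_assoc]
        rw [h]; exact hgen _ _
    | zero => simpa using S.zero_mem
    | add x y hx hy ihx ihy => rw [mul_add]; exact S.add_mem ihx ihy
    | smul t x hx ih => rw [mul_smul_comm]; exact S.smul_mem _ ih
  have hmr : ∀ (r : A) (a : A), a ∈ S → a * r ∈ S := by
    intro r a ha
    induction ha using Submodule.span_induction with
    | mem x hx =>
        obtain ⟨p, q, rfl⟩ := hx
        have h : (p * c * q) * r = p * c * (q * r) := by simp [mul_assoc]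
        rw [h]; exact hgen _ _
    | zero => simpa using S.zero_mem
    | add x y hx hy ihx ihy => rw [add_mul]; exact S.add_mem ihx ihy
    | smul t x hx ih => rw [smul_mul_assoc]; exact S.smul_mem _ ih
  let J : TwoSidedIdeal A := TwoSidedIdeal.mk' (S : Set A)
    S.zero_mem (fun hx hy => S.add_mem hx hy) (fun hx => S.neg_mem hx)
    (fun {x y} hy => hml x y hy) (fun {x y} hx => hmr y x hx)
  have hJmem : ∀ a : A, a ∈ J ↔ a ∈ S := fun a =>
    TwoSidedIdeal.mem_mk' _ _ _ _ _ _ a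
  have hcS : c ∈ S := by simpa using hgen 1 1
  haveI := IsSimpleRing.simple (R := A)
  rcases eq_bot_or_eq_top J with h | h
  · exfalso
    have : c ∈ J := (hJmem c).mpr hcS
    rw [h] at this
    rw [TwoSidedIdeal.mem_bot] at this
    exact hc this
  · refine Submodule.eq_top_iff'.mpr fun a => ?_
    have : a ∈ J := by rw [h]; exact TwoSidedIdeal.mem_top A
    exact (hJmem a).mp this

/-- Uniqueness of trace functionals on a finite-dimensional central simple algebra. -/
lemma aux_trace_unique [IsSimpleRing A] [Algebra.IsCentral F A] [FiniteDimensional F A]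
    (f g : A →ₗ[F] F) (hf : ∀ x y : A, f (x * y) = f (y * x))
    (hg : ∀ x y : A, g (x * y) = g (y * x)) (hf0 : f ≠ 0) :
    ∃ lam : F, g = lam • f := by
  classical
  haveI := IsSimpleRing.simple (R := A)
  -- the radical argument
  have hker : ∀ a : A, (∀ y : A, f (a * y) = 0) → a = 0 := by
    intro a ha
    let J : TwoSidedIdeal A := TwoSidedIdeal.mk' {b : A | ∀ y : A, f (b * y) = 0}
      (fun y => by simp)
      (fun {x y} hx hy z => by rw [add_mul, map_add, hx z, hy z, add_zero])
      (fun {x} hx y => by rw [neg_mul, map_neg, hx y, neg_zero])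
      (fun {x y} hy z => by
        rw [mul_assoc, hf x (y * z), mul_assoc]; exact hy (z * x))
      (fun {x y} hx z => by rw [mul_assoc]; exact hx (y * z))
    have hmemJ : ∀ b : A, b ∈ J ↔ ∀ y : A, f (b * y) = 0 := fun b =>
      TwoSidedIdeal.mem_mk' _ _ _ _ _ _ b
    rcases eq_bot_or_eq_top J with h | h
    · have : a ∈ J := (hmemJ a).mpr ha
      rw [h, TwoSidedIdeal.mem_bot] at this
      exact this
    · exfalso
      apply hf0
      have h1 : (1 : A) ∈ J := by rw [h]; exact TwoSidedIdeal.mem_top A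
      have h1' := (hmemJ 1).mp h1
      ext y
      simpa using h1' y
  -- the linear map a ↦ (y ↦ f (a * y))
  let Φ : A →ₗ[F] Module.Dual F A :=
    (LinearMap.llcomp F A A F f).comp (LinearMap.mul F A)
  have hΦ : ∀ a y : A, Φ a y = f (a * y) := fun a y => rfl
  have hΦinj : Function.Injective Φ := by
    rw [← LinearMap.ker_eq_bot]
    refine (Submodule.eq_bot_iff _).mpr fun a ha => ?_
    apply hker
    intro y
    have : Φ a = 0 := ha
    calc f (a * y) = Φ a y := rfl
    _ = 0 := by rw [this]; rfl
  have hΦsurj : Function.Surjective Φ := by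
    have hrank : Module.finrank F A = Module.finrank F (Module.Dual F A) :=
      (Subspace.dual_finrank_eq).symm
    exact (LinearMap.injective_iff_surjective_of_finrank_eq_finrank hrank).mp hΦinj
  obtain ⟨cc, hcc⟩ := hΦsurj g
  have hccy : ∀ y : A, g y = f (cc * y) := fun y => by rw [← hcc]; rfl
  -- cc is central
  have hcen : ∀ x : A, x * cc = cc * x := by
    intro x
    have h0 : ∀ y : A, f ((cc * x - x * cc) * y) = 0 := by
      intro y
      have e1 : f (cc * x * y) = f (cc * (x * y)) := by rw [mul_assoc]
      have e2 : f (cc * (x * y)) = f (cc * (y * x)) := by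
        have := hg (x) (y)
        rw [hccy (x * y), hccy (y * x)] at this
        exact this
      have e3 : f (x * cc * y) = f (cc * (y * x)) := by
        rw [mul_assoc, hf x (cc * y), mul_assoc]
      rw [sub_mul, map_sub, e1, e2, e3, sub_self]
    have := hker _ h0
    have := sub_eq_zero.mp this
    exact this.symm
  have hccZ : cc ∈ Subalgebra.center F A := Subalgebra.mem_center_iff.mpr hcen
  have hccbot : cc ∈ (⊥ : Subalgebra F A) := Algebra.IsCentral.out hccZ
  obtain ⟨lam, hlam⟩ := Algebra.mem_bot.mp hccbot
  refine ⟨lam, ?_⟩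
  ext y
  rw [LinearMap.smul_apply, hccy y, ← hlam, ← Algebra.smul_def, map_smul]

/-- The span of commutators has codimension at most 1. -/
lemma aux_comm_codim [IsSimpleRing A] [Algebra.IsCentral F A] [FiniteDimensional F A]
    {u a : A} (hu : u ∉ Submodule.span F {x : A | ∃ a b : A, x = a * b - b * a}) :
    a ∈ Submodule.span F {x : A | ∃ a b : A, x = a * b - b * a} ⊔ Submodule.span F {u} := by
  classical
  set C := Submodule.span F {x : A | ∃ a b : A, x = a * b - b * a} with hCdef
  by_contra ha
  have hu2 : u ∉ C ⊔ Submodule.span F {a} := by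
    intro h
    rw [Submodule.mem_sup] at h
    obtain ⟨cx, hcx, z, hz, hsum⟩ := h
    rw [Submodule.mem_span_singleton] at hz
    obtain ⟨μ, rfl⟩ := hz
    by_cases hμ : μ = 0
    · subst hμ
      rw [zero_smul, add_zero] at hsum
      exact hu (hsum ▸ hcx)
    · apply ha
      have haeq : a = μ⁻¹ • u - μ⁻¹ • cx := by
        rw [← hsum]
        rw [smul_add, smul_smul, inv_mul_cancel₀ hμ, one_smul]
        abel
      rw [haeq]
      refine Submodule.sub_mem _ ?_ ?_
      · exact Submodule.mem_sup_right (Submodule.smul_mem _ _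
          (Submodule.mem_span_singleton_self u))
      · exact Submodule.mem_sup_left (C.smul_mem _ hcx)
  -- build dual functionals
  have mk : ∀ (v w : A), v ∉ C ⊔ Submodule.span F {w} →
      ∃ φ : A →ₗ[F] F, (∀ t ∈ C, φ t = 0) ∧ φ w = 0 ∧ φ v ≠ 0 := by
    intro v w hv
    set K := C ⊔ Submodule.span F {w} with hK
    have hπv : K.mkQ v ≠ 0 := by
      rw [Submodule.mkQ_apply, ne_eq, Submodule.Quotient.mk_eq_zero]
      exact hv
    have : ¬ (∀ φ : Module.Dual F (A ⧸ K), φ (K.mkQ v) = 0) := by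
      rw [Module.forall_dual_apply_eq_zero_iff]
      exact hπv
    push_neg at this
    obtain ⟨φ₀, hφ₀⟩ := this
    refine ⟨φ₀.comp K.mkQ, ?_, ?_, hφ₀⟩
    · intro t ht
      have htK : t ∈ K := le_sup_left (a := C) (b := Submodule.span F {w}) ht
      have hz : (Submodule.Quotient.mk t : A ⧸ K) = 0 :=
        (Submodule.Quotient.mk_eq_zero K).mpr htK
      simp only [LinearMap.comp_apply, Submodule.mkQ_apply, hz, map_zero]
    · have hwK : w ∈ K := le_sup_right (a := C) (Submodule.mem_span_singleton_self w)
      have hz : (Submodule.Quotient.mk w : A ⧸ K) = 0 :=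
        (Submodule.Quotient.mk_eq_zero K).mpr hwK
      simp only [LinearMap.comp_apply, Submodule.mkQ_apply, hz, map_zero]
  obtain ⟨f, hfC, hfa, hfu⟩ := mk u a hu2
  obtain ⟨g, hgC, hgu, hga⟩ := mk a u ha
  have hftr : ∀ x y : A, f (x * y) = f (y * x) := by
    intro x y
    have : f (x * y - y * x) = 0 := hfC _ (Submodule.subset_span ⟨x, y, rfl⟩)
    rw [map_sub, sub_eq_zero] at this
    exact this
  have hgtr : ∀ x y : A, g (x * y) = g (y * x) := by
    intro x y
    have : g (x * y - y * x) = 0 := hgC _ (Submodule.subset_span ⟨x, y, rfl⟩)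
    rw [map_sub, sub_eq_zero] at this
    exact this
  have hf0 : f ≠ 0 := by
    intro h
    apply hfu
    rw [h]; rfl
  obtain ⟨lam, hlam⟩ := aux_trace_unique f g hftr hgtr hf0
  have h1 : g u = lam * f u := by rw [hlam]; rfl
  have h2 : lam = 0 := by
    rw [hgu] at h1
    rcases mul_eq_zero.mp h1.symm with h | h
    · exact h
    · exact absurd h hfu
  apply hga
  rw [hlam, h2, zero_smul]
  rfl

end Aux

/-- **Theorem 3.10 / Corollary 3.11(2) (central simple case).** Let `A` be a
finite-dimensional central simple algebra over a field `F` with `char F ≠ 2`, equipped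
with an involution `st` of the second kind: an additive, antimultiplicative, involutive
map `A → A` mapping the center `Z = F·1` into itself but not fixing it pointwise.
Then every Lie skew-ideal `L` of `A` is either `0`, `Z`, the `F`-linear span `[A,A]`
of all commutators, or `A`. -/
theorem stmt_9 (F A : Type*) [Field F] [Ring A] [Algebra F A]
    [FiniteDimensional F A] [IsSimpleRing A] [Algebra.IsCentral F A]
    (hchar : ringChar F ≠ 2)
    (st : A → A)
    (hadd : ∀ x y, st (x + y) = st x + st y)
    (hmul : ∀ x y, st (x * y) = st y * st x)
    (hinv : ∀ x, st (st x) = x)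
    (hcenter : ∀ c : F, ∃ c' : F, st (algebraMap F A c) = algebraMap F A c')
    (hsecond : ∃ c : F, st (algebraMap F A c) ≠ algebraMap F A c)
    (L : Submodule F A)
    (hL : ∀ l ∈ L, ∀ k : A, st k = -k → l * k - k * l ∈ L) :
    L = ⊥ ∨
    L = Submodule.span F {(1 : A)} ∨
    L = Submodule.span F {x : A | ∃ a b, x = a * b - b * a} ∨
    L = ⊤ := by
  classical
  have h2F : (2 : F) ≠ 0 := Ring.two_ne_zero hchar
  -- basic properties of st
  have hst0 : st 0 = 0 := by
    have h := hadd 0 0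
    rw [add_zero] at h
    exact (left_eq_add.mp h)
  have hstneg : ∀ x, st (-x) = - st x := by
    intro x
    have h := hadd x (-x)
    rw [add_neg_cancel, hst0] at h
    exact (neg_eq_of_add_eq_zero_right h.symm).symm
  have hsub : ∀ x y, st (x - y) = st x - st y := by
    intro x y
    rw [sub_eq_add_neg, hadd, hstneg, sub_eq_add_neg]
  -- the skew central element z
  obtain ⟨c, hc⟩ := hsecond
  obtain ⟨c', hc'⟩ := hcenter c
  set μ : F := c - c' with hμdef
  set z : A := algebraMap F A μ with hzdef
  have hμ : μ ≠ 0 := by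
    intro h
    apply hc
    have : c = c' := by rwa [sub_eq_zero] at h
    rw [hc', this]
  have hstc' : st (algebraMap F A c') = algebraMap F A c := by
    rw [← hc', hinv]
  have hstz : st z = -z := by
    rw [hzdef, hμdef, map_sub, hsub, hc', hstc']
    abel
  -- upgrade to a genuine Lie ideal
  have hLie : ∀ l ∈ L, ∀ a : A, l * a - a * l ∈ L := by
    intro l hl a
    have hk : st (a - st a) = -(a - st a) := by
      rw [hsub, hinv]; abel
    have h1 : l * (a - st a) - (a - st a) * l ∈ L := hL l hl _ hk
    have hzcomm : ∀ w : A, w * z = z * w := fun w => (Algebra.commutes μ w).symm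
    have hs : st (z * (a + st a)) = -(z * (a + st a)) := by
      rw [hmul, hadd, hinv, hstz, mul_neg, hzcomm (st a + a), add_comm (st a) a]
    have h2 : l * (z * (a + st a)) - (z * (a + st a)) * l ∈ L := hL l hl _ hs
    have hzs : z * (a + st a) = μ • (a + st a) := (Algebra.smul_def μ _).symm
    rw [hzs] at h2
    have h2' : l * (a + st a) - (a + st a) * l ∈ L := by
      have h3 := L.smul_mem μ⁻¹ h2
      have e : μ⁻¹ • (l * (μ • (a + st a)) - (μ • (a + st a)) * l)
          = l * (a + st a) - (a + st a) * l := by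
        rw [mul_smul_comm, smul_mul_assoc, ← smul_sub, smul_smul,
          inv_mul_cancel₀ hμ, one_smul]
      rwa [e] at h3
    have hsum : (l * (a + st a) - (a + st a) * l) + (l * (a - st a) - (a - st a) * l)
        = (2 : F) • (l * a - a * l) := by
      rw [two_smul]
      noncomm_ring
    have h4 : (2 : F) • (l * a - a * l) ∈ L := hsum ▸ L.add_mem h2' h1
    have h5 := L.smul_mem (2 : F)⁻¹ h4
    rwa [smul_smul, inv_mul_cancel₀ h2F, one_smul] at h5
  -- case split on commutativity of L
  by_cases hcomm : ∀ m ∈ L, ∀ n ∈ L, m * n - n * m = 0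
  · -- L is central
    have hcentral : ∀ u ∈ L, ∃ lam : F, u = lam • (1 : A) := by
      intro u hu
      have hd : ∀ x : A, u * x - x * u ∈ L := fun x => hLie u hu x
      have hdd : ∀ x : A, u * (u * x - x * u) - (u * x - x * u) * u = 0 :=
        fun x => hcomm u hu _ (hd x)
      have hprod : ∀ x y : A, (u * x - x * u) * (u * y - y * u) = 0 := by
        intro x y
        have key : (u * x - x * u) * (u * y - y * u) + (u * x - x * u) * (u * y - y * u)
            = (u * (u * (x * y) - (x * y) * u) - (u * (x * y) - (x * y) * u) * u)
              - (u * (u * x - x * u) - (u * x - x * u) * u) * y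
              - x * (u * (u * y - y * u) - (u * y - y * u) * u) := by
          noncomm_ring
        rw [hdd, hdd, hdd, zero_mul, mul_zero, sub_zero, sub_zero] at key
        have h2 : (2 : F) • ((u * x - x * u) * (u * y - y * u)) = 0 := by
          rw [two_smul, key]
        exact (smul_eq_zero.mp h2).resolve_left h2F
      have htriple : ∀ x y w : A, (u * x - x * u) * y * (u * w - w * u) = 0 := by
        intro x y w
        have key : (u * x - x * u) * y * (u * w - w * u)
            = (u * (x * y) - (x * y) * u) * (u * w - w * u)
              - x * ((u * y - y * u) * (u * w - w * u)) := by
          noncomm_ring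
        rw [hprod, hprod, mul_zero, sub_zero] at key
        exact key
      have hcen : ∀ x : A, u * x = x * u := by
        intro x
        by_contra hne
        have hcne : u * x - x * u ≠ 0 := sub_ne_zero.mpr hne
        have htop := aux_span_xcy_eq_top (F := F) (u * x - x * u) hcne
        have hall : ∀ t ∈ Submodule.span F
            {t : A | ∃ p q : A, t = p * (u * x - x * u) * q},
            t * (u * x - x * u) = 0 := by
          intro t ht
          induction ht using Submodule.span_induction with
          | mem t h =>
              obtain ⟨p, q, rfl⟩ := h
              have e : p * (u * x - x * u) * q * (u * x - x * u)
                  = p * ((u * x - x * u) * q * (u * x - x * u)) := by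
                simp [mul_assoc]
              rw [e, htriple x q x, mul_zero]
          | zero => rw [zero_mul]
          | add a b _ _ iha ihb => rw [add_mul, iha, ihb, add_zero]
          | smul r a _ ih => rw [smul_mul_assoc, ih, smul_zero]
        have h1 : (1 : A) ∈ Submodule.span F
            {t : A | ∃ p q : A, t = p * (u * x - x * u) * q} := by
          rw [htop]; trivial
        have := hall 1 h1
        rw [one_mul] at this
        exact hcne this
      have hZ : u ∈ (⊥ : Subalgebra F A) :=
        Algebra.IsCentral.out (Subalgebra.mem_center_iff.mpr (fun b => (hcen b).symm))
      obtain ⟨lam, hlam⟩ := Algebra.mem_bot.mp hZ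
      exact ⟨lam, by rw [← hlam, Algebra.algebraMap_eq_smul_one]⟩
    by_cases hbot : L = ⊥
    · exact Or.inl hbot
    · refine Or.inr (Or.inl ?_)
      obtain ⟨u, hu, hune⟩ := (Submodule.ne_bot_iff L).mp hbot
      obtain ⟨lam, hueq⟩ := hcentral u hu
      have hlam : lam ≠ 0 := by
        intro h
        apply hune
        rw [hueq, h, zero_smul]
      apply le_antisymm
      · intro v hv
        obtain ⟨ν, hveq⟩ := hcentral v hv
        rw [hveq]
        exact Submodule.smul_mem _ _ (Submodule.mem_span_singleton_self 1)
      · rw [Submodule.span_le, Set.singleton_subset_iff]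
        have h1 : (1 : A) = lam⁻¹ • u := by
          rw [hueq, smul_smul, inv_mul_cancel₀ hlam, one_smul]
        rw [SetLike.mem_coe, h1]
        exact L.smul_mem _ hu
  · -- noncommutative case : L contains all commutators
    push_neg at hcomm
    obtain ⟨m, hm, n, hn, hmn⟩ := hcomm
    set c : A := m * n - n * m with hcdef
    -- the submodule W of elements a with [a, A] ⊆ L
    set W : Submodule F A :=
      { carrier := {a : A | ∀ r : A, a * r - r * a ∈ L}
        add_mem' := by
          intro a b ha hb
          intro r
          have h := L.add_mem (ha r) (hb r)
          have e : (a * r - r * a) + (b * r - r * b) = (a + b) * r - r * (a + b) := by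
            noncomm_ring
          rwa [e] at h
        zero_mem' := by
          intro r
          simpa using L.zero_mem
        smul_mem' := by
          intro t a ha
          intro r
          have h := L.smul_mem t (ha r)
          have e : t • (a * r - r * a) = (t • a) * r - r * (t • a) := by
            rw [smul_sub, smul_mul_assoc, mul_smul_comm]
          rwa [e] at h } with hWdef
    have hkey : ∀ x y : A, x * c * y ∈ W := by
      intro x y
      show ∀ r : A, (x * c * y) * r - r * (x * c * y) ∈ L
      intro r
      have hid : (x * c * y) * r - r * (x * c * y) =
          (m*(n*r*x*y) - (n*r*x*y)*m) -
            (m*(r*x*n*y) - (r*x*n*y)*m) +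
            (m*(x*n*y*r) - (x*n*y*r)*m) -
            (m*(x*y*n*r) - (x*y*n*r)*m) -
            (n*(r*m*x*y) - (r*m*x*y)*n) +
            (n*(r*x*m*y) - (r*x*m*y)*n) -
            (n*(x*m*y*r) - (x*m*y*r)*n) +
            (n*(x*y*m*r) - (x*y*m*r)*n) +
            ((m*(r) - (r)*m)*(x*n*y) - (x*n*y)*(m*(r) - (r)*m)) -
            ((m*(x) - (x)*m)*(n*y*r) - (n*y*r)*(m*(x) - (x)*m)) +
            ((m*(x) - (x)*m)*(y*n*r) - (y*n*r)*(m*(x) - (x)*m)) +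
            ((m*(y) - (y)*m)*(r*n*x) - (r*n*x)*(m*(y) - (y)*m)) -
            ((m*(y) - (y)*m)*(r*x*n) - (r*x*n)*(m*(y) - (y)*m)) -
            ((n*(r) - (r)*n)*(x*m*y) - (x*m*y)*(n*(r) - (r)*n)) +
            ((n*(r) - (r)*n)*(x*y*m) - (x*y*m)*(n*(r) - (r)*n)) +
            ((n*(x) - (x)*n)*(m*y*r) - (m*y*r)*(n*(x) - (x)*n)) -
            ((n*(x) - (x)*n)*(y*m*r) - (y*m*r)*(n*(x) - (x)*n)) -
            ((n*(y) - (y)*n)*(r*m*x) - (r*m*x)*(n*(y) - (y)*n)) +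
            ((n*(y) - (y)*n)*(r*x*m) - (r*x*m)*(n*(y) - (y)*n)) -
            ((m*(n*r) - (n*r)*m)*(x*y) - (x*y)*(m*(n*r) - (n*r)*m)) := by
        rw [hcdef]
        noncomm_ring
      rw [hid]
      exact L.sub_mem (L.add_mem (L.sub_mem (L.sub_mem (L.add_mem (L.add_mem (L.sub_mem (L.sub_mem (L.add_mem (L.add_mem (L.sub_mem (L.add_mem (L.add_mem (L.sub_mem (L.add_mem (L.sub_mem (L.sub_mem (L.add_mem (L.sub_mem (hLie m hm (n*r*x*y))
            (hLie m hm (r*x*n*y)))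
            (hLie m hm (x*n*y*r)))
            (hLie m hm (x*y*n*r)))
            (hLie n hn (r*m*x*y)))
            (hLie n hn (r*x*m*y)))
            (hLie n hn (x*m*y*r)))
            (hLie n hn (x*y*m*r)))
            (hLie _ (hLie m hm (r)) (x*n*y)))
            (hLie _ (hLie m hm (x)) (n*y*r)))
            (hLie _ (hLie m hm (x)) (y*n*r)))
            (hLie _ (hLie m hm (y)) (r*n*x)))
            (hLie _ (hLie m hm (y)) (r*x*n)))
            (hLie _ (hLie n hn (r)) (x*m*y)))
            (hLie _ (hLie n hn (r)) (x*y*m)))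
            (hLie _ (hLie n hn (x)) (m*y*r)))
            (hLie _ (hLie n hn (x)) (y*m*r)))
            (hLie _ (hLie n hn (y)) (r*m*x)))
            (hLie _ (hLie n hn (y)) (r*x*m)))
            (hLie _ (hLie m hm (n*r)) (x*y))
    have hWtop : ∀ a : A, a ∈ W := by
      have hle : Submodule.span F {t : A | ∃ x y : A, t = x * c * y} ≤ W := by
        rw [Submodule.span_le]
        rintro t ⟨x, y, rfl⟩
        exact hkey x y
      rw [aux_span_xcy_eq_top (F := F) c hmn] at hle
      intro a
      exact hle trivial
    have hCW : ∀ a r : A, a * r - r * a ∈ L := fun a r => hWtop a r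
    have hCL : Submodule.span F {x : A | ∃ a b, x = a * b - b * a} ≤ L := by
      rw [Submodule.span_le]
      rintro t ⟨a, b, rfl⟩
      exact hCW a b
    by_cases hLC : L = Submodule.span F {x : A | ∃ a b, x = a * b - b * a}
    · exact Or.inr (Or.inr (Or.inl hLC))
    · refine Or.inr (Or.inr (Or.inr ?_))
      have hex : ∃ u ∈ L, u ∉ Submodule.span F {x : A | ∃ a b, x = a * b - b * a} := by
        by_contra h
        push_neg at h
        exact hLC (le_antisymm h hCL)
      obtain ⟨u, huL, huC⟩ := hex
      rw [eq_top_iff]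
      intro a _
      have hmem := aux_comm_codim (F := F) (A := A) (a := a) huC
      have hsub : Submodule.span F {x : A | ∃ a b : A, x = a * b - b * a}
          ⊔ Submodule.span F {u} ≤ L := by
        refine sup_le hCL ?_
        rw [Submodule.span_singleton_le_iff_mem]
        exact huL
      exact hsub hmem
end

section
/- Let F be a field with involution and let f = f(X_1, …, X_n, X_1^*, …, X_n^*) ∈ F⟨X_1, …, X_n, X_1^*, …, X_n^*⟩ be linear in X_n, i.e., every monomial of f contains the letters X_n and X_n^* a total of exactly once. Then there exist g and g' in F⟨X_1, …, X_{n−1}, X_1^*, …, X_{n−1}^*⟩ (polynomials not involving X_n or X_n^*) such that f is cyclically equivalent to g·X_n + X_n^*·g'. -/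
/-!
Since `pq - qp` is a commutator, a word `uv` is cyclically equivalent to its rotation `vu`.
A word of degree one in `Xₙ` has the form `u Xₙ v` or `u Xₙ* v` with `u, v` free of `Xₙ`, and
rotating it gives `(vu) Xₙ` or `Xₙ* (vu)`; by linearity this settles every `f`.
-/

open MonoidAlgebra

-- `List.count` on a sum type uses the derived `BEq`, which the library does not prove lawful.
instance Sum.instLawfulBEq {α β : Type*} [BEq α] [LawfulBEq α] [BEq β] [LawfulBEq β] :
    LawfulBEq (α ⊕ β) where
  eq_of_beq {a b} h := by cases a <;> cases b <;> simp_all [BEq.beq, Sum.instBEq.beq]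
  rfl {a} := by cases a <;> simp [BEq.beq, Sum.instBEq.beq]

namespace List

variable {α : Type*} [BEq α] [LawfulBEq α] {a b : α} {l : List α}

theorem exists_eq_append_cons_of_count_eq_one (h : l.count a = 1) :
    ∃ s t, l = s ++ a :: t ∧ a ∉ t ++ s := by
  obtain ⟨s, t, rfl⟩ := append_of_mem (count_pos_iff.mp (h ▸ Nat.one_pos))
  refine ⟨s, t, rfl, fun ha => ?_⟩
  have := count_pos_iff.mpr ha
  simp only [count_append, count_cons_self] at h this
  omega

theorem exists_eq_append_cons_of_count_add_count_eq_one (h : l.count a + l.count b = 1) :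
    ∃ s t, (l = s ++ a :: t ∨ l = s ++ b :: t) ∧ a ∉ t ++ s ∧ b ∉ t ++ s := by
  have not_mem_rotate {s t : List α} {c x : α} (hx : x ∉ s ++ c :: t) : x ∉ t ++ s := by
    simp_all
  rcases (by omega : l.count a = 1 ∧ l.count b = 0 ∨ l.count b = 1 ∧ l.count a = 0)
    with ⟨ha, hb⟩ | ⟨hb, ha⟩
  · obtain ⟨s, t, rfl, hst⟩ := exists_eq_append_cons_of_count_eq_one ha
    exact ⟨s, t, .inl rfl, hst, not_mem_rotate (count_eq_zero.mp hb)⟩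
  · obtain ⟨s, t, rfl, hst⟩ := exists_eq_append_cons_of_count_eq_one hb
    exact ⟨s, t, .inr rfl, not_mem_rotate (count_eq_zero.mp ha), hst⟩

end List

/-- `f` and `g` are cyclically equivalent iff `f - g` lies in this subgroup. -/
def commutatorClosure (A : Type*) [Ring A] : AddSubgroup A :=
  AddSubgroup.closure {x | ∃ p q, x = p * q - q * p}

namespace MonoidAlgebra

variable {R : Type*} [Ring R]

theorem single_mem_supported {M : Type*} {s : Set M} {m : M} (hm : m ∈ s) (r : R) :
    single m r ∈ supported R R s :=
  mem_supported.mpr fun x hx => by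
    rwa [Finset.mem_singleton.mp (Finsupp.support_single_subset hx)]

theorem single_mul_sub_single_mul_mem_commutatorClosure {M : Type*} [Monoid M] (u v : M) (r : R) :
    single (u * v) r - single (v * u) r ∈ commutatorClosure R[M] :=
  AddSubgroup.subset_closure
    ⟨single u r, single v 1, by simp only [single_mul_single, mul_one, one_mul]⟩

end MonoidAlgebra

section LinearWords

open FreeMonoid

variable {R : Type*} [Ring R] {α : Type*} {a b : α}

def wordsAvoiding (a b : α) : Set (FreeMonoid α) := {w | a ∉ w.toList ∧ b ∉ w.toList}

def wordsLinearIn [BEq α] (a b : α) : Set (FreeMonoid α) :=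
  {w | w.toList.count a + w.toList.count b = 1}

def HasCyclicNormalForm (a b : α) (f : R[FreeMonoid α]) : Prop :=
  ∃ g ∈ supported R R (wordsAvoiding a b), ∃ g' ∈ supported R R (wordsAvoiding a b),
    f - (g * of R _ (.of a) + of R _ (.of b) * g') ∈ commutatorClosure R[FreeMonoid α]

theorem HasCyclicNormalForm.zero : HasCyclicNormalForm a b (0 : R[FreeMonoid α]) :=
  ⟨0, zero_mem _, 0, zero_mem _, by simp⟩

theorem HasCyclicNormalForm.add {f₁ f₂ : R[FreeMonoid α]} (h₁ : HasCyclicNormalForm a b f₁)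
    (h₂ : HasCyclicNormalForm a b f₂) : HasCyclicNormalForm a b (f₁ + f₂) := by
  obtain ⟨g₁, hg₁, g₁', hg₁', hf₁⟩ := h₁
  obtain ⟨g₂, hg₂, g₂', hg₂', hf₂⟩ := h₂
  refine ⟨g₁ + g₂, add_mem hg₁ hg₂, g₁' + g₂', add_mem hg₁' hg₂', ?_⟩
  convert add_mem hf₁ hf₂ using 1
  rw [add_mul, mul_add]
  abel

theorem hasCyclicNormalForm_single [BEq α] [LawfulBEq α] {w : FreeMonoid α}
    (hw : w ∈ wordsLinearIn a b) (r : R) : HasCyclicNormalForm a b (single w r) := by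
  obtain ⟨s, t, hst | hst, ha, hb⟩ := List.exists_eq_append_cons_of_count_add_count_eq_one hw
  all_goals have hts : ofList (t ++ s) ∈ wordsAvoiding a b :=
    ⟨by rwa [toList_ofList], by rwa [toList_ofList]⟩
  · refine ⟨single (ofList (t ++ s)) r, single_mem_supported hts r, 0, zero_mem _, ?_⟩
    have hw : w = ofList (s ++ [a]) * ofList t := toList.injective (by simp [hst])
    have hrot : ofList t * ofList (s ++ [a]) = ofList (t ++ s) * .of a :=
      toList.injective (by simp)
    rw [mul_zero, add_zero, of_apply, single_mul_single, mul_one, ← hrot, hw]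
    exact single_mul_sub_single_mul_mem_commutatorClosure _ _ r
  · refine ⟨0, zero_mem _, single (ofList (t ++ s)) r, single_mem_supported hts r, ?_⟩
    have hw : w = ofList s * ofList (b :: t) := toList.injective (by simp [hst])
    have hrot : ofList (b :: t) * ofList s = .of b * ofList (t ++ s) :=
      toList.injective (by simp)
    rw [zero_mul, zero_add, of_apply, single_mul_single, one_mul, ← hrot, hw]
    exact single_mul_sub_single_mul_mem_commutatorClosure _ _ r

theorem hasCyclicNormalForm_of_mem_supported [BEq α] [LawfulBEq α] {f : R[FreeMonoid α]}
    (hf : f ∈ supported R R (wordsLinearIn a b)) : HasCyclicNormalForm a b f := by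
  rw [← sum_coeff_single f]
  exact Finset.sum_induction _ _ (fun _ _ ↦ .add) .zero
    fun w hw ↦ hasCyclicNormalForm_single (hf hw) _

end LinearWords

theorem stmt_12_general (F : Type*) [Field F] (n : ℕ)
    (f : MonoidAlgebra F (FreeMonoid (Fin (n + 1) ⊕ Fin (n + 1))))
    (hf : ∀ w ∈ f.coeff.support,
      (FreeMonoid.toList w).count (Sum.inl (Fin.last n)) +
        (FreeMonoid.toList w).count (Sum.inr (Fin.last n)) = 1) :
    ∃ g g' : MonoidAlgebra F (FreeMonoid (Fin (n + 1) ⊕ Fin (n + 1))),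
      (∀ w ∈ g.coeff.support, Sum.inl (Fin.last n) ∉ FreeMonoid.toList w ∧
          Sum.inr (Fin.last n) ∉ FreeMonoid.toList w) ∧
      (∀ w ∈ g'.coeff.support, Sum.inl (Fin.last n) ∉ FreeMonoid.toList w ∧
          Sum.inr (Fin.last n) ∉ FreeMonoid.toList w) ∧
      f - (g * MonoidAlgebra.of F (FreeMonoid (Fin (n + 1) ⊕ Fin (n + 1)))
              (FreeMonoid.of (Sum.inl (Fin.last n))) +
           MonoidAlgebra.of F (FreeMonoid (Fin (n + 1) ⊕ Fin (n + 1)))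
              (FreeMonoid.of (Sum.inr (Fin.last n))) * g')
        ∈ AddSubgroup.closure
            {x : MonoidAlgebra F (FreeMonoid (Fin (n + 1) ⊕ Fin (n + 1))) |
              ∃ p q, x = p * q - q * p} := by
  obtain ⟨g, hg, g', hg', h⟩ := hasCyclicNormalForm_of_mem_supported (R := F) hf
  exact ⟨g, g', hg, hg', h⟩

/-- **Lemma 4.4.** Let `F` be a field with an involution `τ`, and let
`f ∈ F⟨X₀,…,Xₙ,X₀*,…,Xₙ*⟩` (realized as the monoid algebra of the free monoid on
`Fin (n+1) ⊕ Fin (n+1)`, where `inl i` is `Xᵢ` and `inr i` is `Xᵢ*`) be linear in the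
last variable `Xₙ`: every word of its support contains the letters `Xₙ`, `Xₙ*` a total
of exactly once.  Then there exist `g, g'` not involving `Xₙ` or `Xₙ*` such that `f` is
cyclically equivalent to `g·Xₙ + Xₙ*·g'`, i.e. the difference is a sum of commutators. -/
theorem stmt_12 (F : Type*) [Field F] (τ : F →+* F) (hτ : ∀ c, τ (τ c) = c) (n : ℕ)
    (f : MonoidAlgebra F (FreeMonoid (Fin (n + 1) ⊕ Fin (n + 1))))
    (hf : ∀ w ∈ f.coeff.support,
      (FreeMonoid.toList w).count (Sum.inl (Fin.last n)) +
        (FreeMonoid.toList w).count (Sum.inr (Fin.last n)) = 1) :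
    ∃ g g' : MonoidAlgebra F (FreeMonoid (Fin (n + 1) ⊕ Fin (n + 1))),
      (∀ w ∈ g.coeff.support, Sum.inl (Fin.last n) ∉ FreeMonoid.toList w ∧
          Sum.inr (Fin.last n) ∉ FreeMonoid.toList w) ∧
      (∀ w ∈ g'.coeff.support, Sum.inl (Fin.last n) ∉ FreeMonoid.toList w ∧
          Sum.inr (Fin.last n) ∉ FreeMonoid.toList w) ∧
      f - (g * MonoidAlgebra.of F (FreeMonoid (Fin (n + 1) ⊕ Fin (n + 1)))
              (FreeMonoid.of (Sum.inl (Fin.last n))) +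
           MonoidAlgebra.of F (FreeMonoid (Fin (n + 1) ⊕ Fin (n + 1)))
              (FreeMonoid.of (Sum.inr (Fin.last n))) * g')
        ∈ AddSubgroup.closure
            {x : MonoidAlgebra F (FreeMonoid (Fin (n + 1) ⊕ Fin (n + 1))) |
              ∃ p q, x = p * q - q * p} :=
  stmt_12_general F n f hf
end

section
/- Let F be a field of characteristic 0 and let f = f(X_1, …, X_n) ∈ F⟨X_1, …, X_n⟩. Then tr(f(A_1, …, A_n)) = 0 for all A_1, …, A_n ∈ M_d(F) and all d ≥ 2 if and only if f is a sum of commutators in F⟨X_1, …, X_n⟩ (i.e., f is cyclically equivalent to 0). -/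
/-!
Traces vanish on commutators, which is one direction. Conversely, let `c w` be the coefficient
of the word `w` in `f`. Replacing every matrix `Aᵢ` by `t • Aᵢ` turns `tr f(A)` into a
polynomial in `t`, so each homogeneous part of the trace identity holds separately. The degree-0
part gives `c [] = 0`. For a word `w` of length `k`, the degree-`k` part evaluated at the
adjacency matrices of the `k`-cycle labelled by `w` (tensored with `1₂` to reach dimension `≥ 2`)
gives `∑ s < k, c (w.rotate s) = 0`.

Since `u ≡ u.rotate s` modulo commutators, `f ≡ ∑ v, c (v.rotate s) • v` for every `s`.
Summing over `s < L!`, where `L` is the maximal length of a word in `f`, the right-hand sides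
add up to `0`, so `L! • f`, and hence `f`, is a sum of commutators.
-/

open FreeAlgebra Matrix Finset Fin.NatCast

namespace FreeAlgebra

variable {R X : Type*} [CommSemiring R]

noncomputable def wordBasis (R X : Type*) [CommSemiring R] :
    Module.Basis (List X) R (FreeAlgebra R X) :=
  (basisFreeMonoid R X).reindex FreeMonoid.toList

theorem wordBasis_apply (w : List X) : wordBasis R X w = (w.map (ι R)).prod := by
  simp [wordBasis, basisFreeMonoid, equivMonoidAlgebraFreeMonoid]

theorem wordBasis_append (u v : List X) :
    wordBasis R X (u ++ v) = wordBasis R X u * wordBasis R X v := by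
  simp [wordBasis_apply]

theorem lift_wordBasis {A : Type*} [Semiring A] [Algebra R A] (g : X → A) (w : List X) :
    lift R g (wordBasis R X w) = (w.map g).prod := by
  simp [wordBasis_apply, map_list_prod]

theorem algHom_apply_lift {A B : Type*} [Semiring A] [Algebra R A] [Semiring B] [Algebra R B]
    (φ : A →ₐ[R] B) (g : X → A) (f : FreeAlgebra R X) :
    φ (lift R g f) = lift R (φ ∘ g) f := by
  have : φ.comp (lift R g) = lift R (φ ∘ g) := by ext; simp
  exact DFunLike.congr_fun this f

end FreeAlgebra

theorem List.prod_map_smul_pow {R A X : Type*} [CommSemiring R] [Semiring A] [Algebra R A]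
    (t : R) (g : X → A) (w : List X) :
    (w.map (t • g)).prod = t ^ w.length • (w.map g).prod := by
  induction w with
  | nil => simp
  | cons i w ih => simp [ih, pow_succ, smul_smul, mul_comm]

theorem List.sum_range_length_mul_rotate {X M : Type*} [AddCommMonoid M] (g : List X → M)
    (w : List X) (q : ℕ) :
    ∑ s ∈ Finset.range (w.length * q), g (w.rotate s) =
      q • ∑ s ∈ Finset.range w.length, g (w.rotate s) := by
  induction q with
  | zero => simp
  | succ q ih =>
    rw [Nat.mul_succ, sum_range_add, ih, succ_nsmul]
    congr 1
    refine sum_congr rfl fun s _ => ?_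
    rw [← List.rotate_rotate, List.rotate_length_mul]

section Commutators

abbrev commutatorSpan (K A : Type*) [CommSemiring K] [Ring A] [Algebra K A] : Submodule K A :=
  Submodule.span K {x | ∃ p q, x = p * q - q * p}

open scoped Pointwise in
theorem mem_closure_commutators_of_mem_commutatorSpan {K A : Type*} [CommSemiring K] [Ring A]
    [Algebra K A] {x : A} (hx : x ∈ commutatorSpan K A) :
    x ∈ AddSubgroup.closure {x : A | ∃ p q, x = p * q - q * p} := by
  have hsmul : (Set.univ : Set K) • {x : A | ∃ p q, x = p * q - q * p} ⊆
      {x : A | ∃ p q, x = p * q - q * p} := by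
    rintro _ ⟨a, -, _, ⟨p, q, rfl⟩, rfl⟩
    exact ⟨a • p, q, by dsimp only; rw [smul_sub, smul_mul_assoc, mul_smul_comm]⟩
  rw [← Submodule.mem_toAddSubmonoid, Submodule.span_eq_closure] at hx
  exact AddSubmonoid.closure_le.2 (hsmul.trans AddSubgroup.subset_closure) hx

theorem trace_eq_zero_of_mem_closure_commutators {A R ι : Type*} [Ring A] [CommRing R]
    [Fintype ι] [DecidableEq ι] (φ : A →+* Matrix ι ι R) {x : A}
    (hx : x ∈ AddSubgroup.closure {x : A | ∃ p q, x = p * q - q * p}) :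
    trace (φ x) = 0 :=
  (AddSubgroup.closure_le ((traceAddMonoidHom ι R).comp φ.toAddMonoidHom).ker).2
    (by rintro _ ⟨p, q, rfl⟩; simp [trace_mul_comm (φ p)]) hx

end Commutators

section Symmetrization

variable {K X : Type*} [Field K]

def rotateEquiv (n : ℕ) : List X ≃ List X where
  toFun l := l.rotate n
  invFun l := l.rotate (l.length - n % l.length)
  left_inv _ := (List.rotate_eq_iff.1 rfl).symm
  right_inv _ := List.rotate_eq_iff.2 rfl

noncomputable def rotateCoeffs (n : ℕ) : FreeAlgebra K X ≃ₗ[K] FreeAlgebra K X :=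
  (wordBasis K X).repr ≪≫ₗ Finsupp.domLCongr (rotateEquiv n).symm ≪≫ₗ (wordBasis K X).repr.symm

theorem repr_rotateCoeffs (n : ℕ) (f : FreeAlgebra K X) (w : List X) :
    (wordBasis K X).repr (rotateCoeffs n f) w = (wordBasis K X).repr f (w.rotate n) := by
  simp only [rotateCoeffs, LinearEquiv.trans_apply, LinearEquiv.apply_symm_apply,
    Finsupp.domLCongr_apply]
  rfl

theorem rotateCoeffs_wordBasis_rotate (n : ℕ) (w : List X) :
    rotateCoeffs n (wordBasis K X (w.rotate n)) = wordBasis K X w := by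
  simp only [rotateCoeffs, LinearEquiv.trans_apply, Module.Basis.repr_self,
    Finsupp.domLCongr_single, Module.Basis.repr_symm_single, one_smul]
  exact congrArg _ ((rotateEquiv n).symm_apply_apply w)

theorem wordBasis_sub_wordBasis_rotate_mem (w : List X) (n : ℕ) :
    wordBasis K X w - wordBasis K X (w.rotate n) ∈ commutatorSpan K (FreeAlgebra K X) := by
  have hw : wordBasis K X w = wordBasis K X (w.take (n % w.length)) *
      wordBasis K X (w.drop (n % w.length)) := by
    rw [← wordBasis_append, List.take_append_drop]
  rw [List.rotate_eq_drop_append_take_mod, wordBasis_append, hw]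
  exact Submodule.subset_span ⟨_, _, rfl⟩

theorem sub_rotateCoeffs_mem (n : ℕ) (f : FreeAlgebra K X) :
    f - rotateCoeffs n f ∈ commutatorSpan K (FreeAlgebra K X) := by
  have : Submodule.span K (Set.range (wordBasis K X)) ≤
      (commutatorSpan K (FreeAlgebra K X)).comap (LinearMap.id - (rotateCoeffs n).toLinearMap) := by
    refine Submodule.span_le.2 (Set.range_subset_iff.2 fun u => ?_)
    obtain ⟨w, rfl⟩ := (rotateEquiv n).surjective u
    simpa [rotateEquiv, rotateCoeffs_wordBasis_rotate] using
      Submodule.neg_mem _ (wordBasis_sub_wordBasis_rotate_mem w n)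
  simpa using this ((wordBasis K X).mem_span f)

theorem sum_rotateCoeffs_eq_zero {M : ℕ} {f : FreeAlgebra K X}
    (h : ∀ w : List X, ∑ s ∈ range M, (wordBasis K X).repr f (w.rotate s) = 0) :
    ∑ s ∈ range M, rotateCoeffs s f = 0 :=
  (wordBasis K X).repr.injective <| Finsupp.ext fun w => by simp [repr_rotateCoeffs, h]

theorem mem_commutatorSpan_of_sum_range_rotate [CharZero K] {M : ℕ} (hM : M ≠ 0)
    {f : FreeAlgebra K X}
    (h : ∀ w : List X, ∑ s ∈ range M, (wordBasis K X).repr f (w.rotate s) = 0) :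
    f ∈ commutatorSpan K (FreeAlgebra K X) := by
  have hsum : (M : K) • f = ∑ s ∈ range M, (f - rotateCoeffs s f) := by
    rw [sum_sub_distrib, sum_rotateCoeffs_eq_zero h, sum_const, card_range, sub_zero,
      Nat.cast_smul_eq_nsmul]
  have : (M : K) • f ∈ commutatorSpan K (FreeAlgebra K X) :=
    hsum ▸ Submodule.sum_mem _ fun s _ => sub_rotateCoeffs_mem s f
  exact (Submodule.smul_mem_iff _ (Nat.cast_ne_zero.2 hM)).1 this

theorem mem_commutatorSpan_of_sum_rotate [CharZero K] {f : FreeAlgebra K X}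
    (h0 : (wordBasis K X).repr f [] = 0)
    (h : ∀ w ≠ [], ∑ s ∈ range w.length, (wordBasis K X).repr f (w.rotate s) = 0) :
    f ∈ commutatorSpan K (FreeAlgebra K X) := by
  set L := ((wordBasis K X).repr f).support.sup List.length
  refine mem_commutatorSpan_of_sum_range_rotate (Nat.factorial_ne_zero L) fun w => ?_
  rcases eq_or_ne w [] with rfl | hw
  · simp [h0]
  by_cases hL : w.length ≤ L
  · obtain ⟨q, hq⟩ := Nat.dvd_factorial (List.length_pos_iff.2 hw) hL
    rw [hq, List.sum_range_length_mul_rotate, h w hw, smul_zero]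
  · refine sum_eq_zero fun s _ => Finsupp.notMem_support_iff.1 fun hs => hL ?_
    simpa using Finset.le_sup (f := List.length) hs

end Symmetrization

section Trace

variable {K X ι : Type*} [Fintype ι] [DecidableEq ι]

theorem trace_lift_eq_sum {R : Type*} [CommSemiring R] (A : X → Matrix ι ι R)
    (f : FreeAlgebra R X) :
    trace (lift R A f) = ((wordBasis R X).repr f).sum fun w c => c * trace (w.map A).prod := by
  conv_lhs => rw [← (wordBasis R X).linearCombination_repr f]
  simp [Finsupp.linearCombination_apply, Finsupp.sum, map_sum, trace_sum, lift_wordBasis,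
    trace_smul]

variable [Field K] [Infinite K]

theorem sum_repr_length_eq_zero (A : X → Matrix ι ι K) {f : FreeAlgebra K X}
    (h : ∀ t : K, trace (lift K (t • A) f) = 0) (n : ℕ) :
    (((wordBasis K X).repr f).sum fun w c => if w.length = n then c * trace (w.map A).prod else 0)
      = 0 := by
  set P : Polynomial K := ((wordBasis K X).repr f).sum fun w c =>
    Polynomial.C (c * trace (w.map A).prod) * Polynomial.X ^ w.length
  have hP : P = 0 := Polynomial.funext fun t => by
    rw [Polynomial.eval_zero, ← h t, trace_lift_eq_sum]
    simp [P, Finsupp.sum, Polynomial.eval_finsetSum, List.prod_map_smul_pow, trace_smul]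
    exact Finset.sum_congr rfl fun _ _ => by ring
  have hcoeff := congrArg (Polynomial.coeff · n) hP
  simp only [P, Finsupp.sum, Polynomial.finsetSum_coeff, Polynomial.coeff_C_mul_X_pow,
    Polynomial.coeff_zero, eq_comm (a := n)] at hcoeff
  exact hcoeff

theorem repr_nil_eq_zero [CharZero K] [Nonempty ι] (A : X → Matrix ι ι K)
    {f : FreeAlgebra K X} (h : ∀ t : K, trace (lift K (t • A) f) = 0) :
    (wordBasis K X).repr f [] = 0 := by
  have := sum_repr_length_eq_zero A h 0
  rw [Finsupp.sum, Finset.sum_eq_single []] at this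
  · simpa [Fintype.card_ne_zero] using this
  · exact fun w _ hw => if_neg (by simpa using hw)
  · exact fun hnil => by simp [Finsupp.notMem_support_iff.1 hnil]

end Trace

section CycleMatrix

variable {R X : Type*} [Semiring R] {k : ℕ} [NeZero k]

def cycleWord (a : Fin k → X) (x : Fin k) (n : ℕ) : List X :=
  (List.range n).map fun j : ℕ => a (x + j)

@[simp]
theorem length_cycleWord (a : Fin k → X) (x : Fin k) (n : ℕ) : (cycleWord a x n).length = n := by
  simp [cycleWord]

theorem cycleWord_succ (a : Fin k → X) (x : Fin k) (n : ℕ) :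
    cycleWord a x (n + 1) = a x :: cycleWord a (x + 1) n := by
  simp only [cycleWord, List.range_succ_eq_map, List.map_cons, List.map_map, Function.comp_def,
    Nat.cast_zero, add_zero, Nat.cast_succ, add_assoc, add_comm (1 : Fin k)]

theorem cycleWord_get (w : List X) [NeZero w.length] (x : Fin w.length) :
    cycleWord w.get x w.length = w.rotate x := by
  refine List.ext_getElem (by simp) fun j _ _ => ?_
  simp only [cycleWord, List.getElem_map, List.getElem_rotate]
  simp [Fin.val_add, add_comm]

variable [DecidableEq X]

def cycleMatrix (a : Fin k → X) (i : X) : Matrix (Fin k) (Fin k) R :=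
  Matrix.of fun x y => if y = x + 1 ∧ a x = i then 1 else 0

theorem prod_map_cycleMatrix_apply (a : Fin k → X) (w : List X) (x y : Fin k) :
    (w.map (cycleMatrix (R := R) a)).prod x y =
      if cycleWord a x w.length = w ∧ y = x + (w.length : Fin k) then 1 else 0 := by
  induction w generalizing x with
  | nil => simp [cycleWord, Matrix.one_apply, eq_comm]
  | cons i w ih =>
    simp only [List.map_cons, List.prod_cons, mul_apply, cycleMatrix, of_apply, ite_and, ite_mul,
      zero_mul, Finset.sum_ite_eq', Finset.mem_univ, if_true, ih, cycleWord_succ,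
      List.cons.injEq, List.length_cons, Nat.cast_succ]
    simp only [one_mul, ← ite_and, add_comm (1 : Fin k), add_assoc]

theorem trace_prod_map_cycleMatrix (a : Fin k → X) {w : List X} (hw : w.length = k) :
    trace (w.map (cycleMatrix (R := R) a)).prod = #{x | cycleWord a x k = w} := by
  simp [trace, prod_map_cycleMatrix_apply, hw, Finset.sum_boole]

theorem sum_repr_cycleWord_eq_zero {K : Type*} [Field K] [Infinite K] (a : Fin k → X)
    {f : FreeAlgebra K X} (h : ∀ t : K, trace (lift K (t • cycleMatrix (R := K) a) f) = 0) :
    ∑ x, (wordBasis K X).repr f (cycleWord a x k) = 0 := by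
  rw [← sum_repr_length_eq_zero _ h k]
  simp only [← Finsupp.sum_ite_self_eq' ((wordBasis K X).repr f)]
  simp only [Finsupp.sum]
  rw [Finset.sum_comm]
  refine Finset.sum_congr rfl fun w _ => ?_
  split_ifs with hw
  · rw [trace_prod_map_cycleMatrix a hw, Finset.sum_ite, Finset.sum_const_zero, add_zero,
      Finset.sum_const, nsmul_eq_mul, mul_comm]
    simp_rw [eq_comm]
  · exact Finset.sum_eq_zero fun x _ => if_neg fun hx : w = _ => hw (hx ▸ length_cycleWord a x k)

end CycleMatrix

theorem trace_lift_eq_zero_of_forall_two_le {K X : Type*} [Field K] [CharZero K]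
    {f : FreeAlgebra K X}
    (H : ∀ d : ℕ, 2 ≤ d → ∀ A : X → Matrix (Fin d) (Fin d) K, trace (lift K A f) = 0)
    {m : ℕ} [NeZero m] (A : X → Matrix (Fin m) (Fin m) K) : trace (lift K A f) = 0 := by
  let e : Fin m × Fin 2 ≃ Fin (m * 2) := finProdFinEquiv
  let φ : Matrix (Fin m) (Fin m) K →ₐ[K] Matrix (Fin (m * 2)) (Fin (m * 2)) K :=
    (reindexAlgEquiv K K e).toAlgHom.comp
      ((kroneckerAlgEquiv (Fin m) (Fin 2) K).toAlgHom.comp Algebra.TensorProduct.includeLeft)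
  have hφ : ∀ M, trace (φ M) = 2 * trace M := fun M => by
    have hreindex (N : Matrix (Fin m × Fin 2) (Fin m × Fin 2) K) :
        trace (N.submatrix e.symm e.symm) = trace N := e.symm.sum_comp fun i => N i i
    simp [φ, hreindex, trace_kronecker, mul_comm]
  have := H (m * 2) (Nat.le_mul_of_pos_left 2 (NeZero.pos m)) (φ ∘ A)
  rw [← algHom_apply_lift, hφ] at this
  exact (mul_eq_zero.1 this).resolve_left two_ne_zero

/-- **Corollary 4.7 (dimension-free tracial Nullstellensatz).** Let `F` be a field of
characteristic `0` and `f ∈ F⟨X₁,…,Xₙ⟩`.  Then `tr(f(A₁,…,Aₙ)) = 0` for all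
`Aᵢ ∈ M_d(F)` and all `d ≥ 2` iff `f` is a sum of commutators in `F⟨X₁,…,Xₙ⟩`
(i.e. `f` is cyclically equivalent to `0`). -/
theorem stmt_15 (F : Type*) [Field F] [CharZero F] (n : ℕ) (f : FreeAlgebra F (Fin n)) :
    (∀ d : ℕ, 2 ≤ d → ∀ A : Fin n → Matrix (Fin d) (Fin d) F,
        Matrix.trace (FreeAlgebra.lift F A f) = 0) ↔
      f ∈ AddSubgroup.closure
            {x : FreeAlgebra F (Fin n) | ∃ p q, x = p * q - q * p} := by
  refine ⟨fun H => ?_, fun hf _ _ A =>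
    trace_eq_zero_of_mem_closure_commutators (lift F A).toRingHom hf⟩
  refine mem_closure_commutators_of_mem_commutatorSpan (mem_commutatorSpan_of_sum_rotate ?_ ?_)
  · exact repr_nil_eq_zero (0 : Fin n → Matrix (Fin 1) (Fin 1) F) fun _ =>
      trace_lift_eq_zero_of_forall_two_le H _
  · intro w hw
    have : NeZero w.length := ⟨by simpa using hw⟩
    rw [← Fin.sum_univ_eq_sum_range fun s => (wordBasis F (Fin n)).repr f (w.rotate s)]
    simpa only [cycleWord_get] using
      sum_repr_cycleWord_eq_zero w.get fun _ => trace_lift_eq_zero_of_forall_two_le H _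
end
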